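/- arXiv:1908.05083 — 4 statements merged into one kernel-verified Lean document; each statement's English description precedes it below -/
import Mathlib

section
/- For every x ∈ ℝ^{p+q} one has dim 𝔫_x ≥ q(p−1) − (p+q−2); equivalently, every orbit of the nilpotent Iwasawa factor N = exp(𝔫) on ℝ^{p,q} has dimension at most p+q−2, so the natural action of N on ℝ^{p,q} is not of cohomogeneity one. -/
open Matrix

noncomputable section

/-- 1-based standard basis vector `e i` of `ℝ^n` (zero if `i` is out of range). -/
def stdE (n i : ℕ) : Fin n → ℝ := fun j => if (j : ℕ) + 1 = i then 1 else 0

/-- `w i := e_{p-i+1} - e_{p+i}`. -/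
def wVec (p q i : ℕ) : Fin (p + q) → ℝ := stdE (p + q) (p - i + 1) - stdE (p + q) (p + i)

/-- `v i := e_{p-i+1} + e_{p+i}`. -/
def vVec (p q i : ℕ) : Fin (p + q) → ℝ := stdE (p + q) (p - i + 1) + stdE (p + q) (p + i)

/-- The scalar product of signature `(p,q)` on `ℝ^{p+q}`. -/
def ip (p q : ℕ) (x y : Fin (p + q) → ℝ) : ℝ :=
  ∑ i : Fin (p + q), (if (i : ℕ) < p then (1 : ℝ) else -1) * x i * y i

/-- The matrix `J = diag(I_p, -I_q)`. -/
def Jmat (p q : ℕ) : Matrix (Fin (p + q)) (Fin (p + q)) ℝ :=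
  Matrix.diagonal (fun i => if (i : ℕ) < p then (1 : ℝ) else -1)

/-- Entry of a square matrix, with 1-based indices (0 outside the range). -/
def ent {n : ℕ} (X : Matrix (Fin n) (Fin n) ℝ) (i j : ℕ) : ℝ :=
  if h : i - 1 < n ∧ j - 1 < n then X ⟨i - 1, h.1⟩ ⟨j - 1, h.2⟩ else 0

/-- Coordinate of a vector, with 1-based index (0 outside the range). -/
def vent {n : ℕ} (x : Fin n → ℝ) (i : ℕ) : ℝ :=
  if h : i - 1 < n then x ⟨i - 1, h⟩ else 0

lemma ent_zero {n : ℕ} (i j : ℕ) : ent (0 : Matrix (Fin n) (Fin n) ℝ) i j = 0 := by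
  unfold ent; split <;> simp

lemma ent_add {n : ℕ} (X Y : Matrix (Fin n) (Fin n) ℝ) (i j : ℕ) :
    ent (X + Y) i j = ent X i j + ent Y i j := by
  unfold ent; split <;> simp [Matrix.add_apply]

lemma ent_smul {n : ℕ} (c : ℝ) (X : Matrix (Fin n) (Fin n) ℝ) (i j : ℕ) :
    ent (c • X) i j = c * ent X i j := by
  unfold ent; split <;> simp [Matrix.smul_apply]

/-- The Lie algebra `𝔰𝔬(p,q)`, as a set of matrices. -/
def soSet (p q : ℕ) : Set (Matrix (Fin (p + q)) (Fin (p + q)) ℝ) :=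
  {X | Xᵀ * Jmat p q + Jmat p q * X = 0}

lemma soSet_zero (p q : ℕ) : (0 : Matrix (Fin (p + q)) (Fin (p + q)) ℝ) ∈ soSet p q := by
  simp [soSet]

lemma soSet_add (p q : ℕ) {X Y : Matrix (Fin (p + q)) (Fin (p + q)) ℝ}
    (hX : X ∈ soSet p q) (hY : Y ∈ soSet p q) : X + Y ∈ soSet p q := by
  simp only [soSet, Set.mem_setOf_eq] at *
  rw [Matrix.transpose_add, Matrix.add_mul, Matrix.mul_add,
    show Xᵀ * Jmat p q + Yᵀ * Jmat p q + (Jmat p q * X + Jmat p q * Y)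
      = (Xᵀ * Jmat p q + Jmat p q * X) + (Yᵀ * Jmat p q + Jmat p q * Y) by abel,
    hX, hY, add_zero]

lemma soSet_smul (p q : ℕ) (c : ℝ) {X : Matrix (Fin (p + q)) (Fin (p + q)) ℝ}
    (hX : X ∈ soSet p q) : c • X ∈ soSet p q := by
  simp only [soSet, Set.mem_setOf_eq] at *
  rw [Matrix.transpose_smul, Matrix.smul_mul, Matrix.mul_smul, ← smul_add, hX, smul_zero]

/-- The set `𝔭` of symmetric elements of `𝔰𝔬(p,q)` (Cartan decomposition). -/
def pSet (p q : ℕ) : Set (Matrix (Fin (p + q)) (Fin (p + q)) ℝ) :=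
  {X | X ∈ soSet p q ∧ Xᵀ = X}

/-- The nilpotent Iwasawa factor `𝔫`, as a set of matrices; the conditions are the
entry conditions on the blocks `A`, `B`, `D` (1-based indices; `A i j = ent X i j`,
`B i l = ent X i (p + l)`, `D i j = ent X (p + i) (p + j)`). -/
def nSet (p q : ℕ) : Set (Matrix (Fin (p + q)) (Fin (p + q)) ℝ) :=
  {X | X ∈ soSet p q ∧
    (∀ i j, 1 ≤ i → i ≤ p - q → 1 ≤ j → j ≤ p - q → ent X i j = 0) ∧
    (∀ l, 1 ≤ l → l ≤ q → ent X (p - l + 1) (p + l) = 0) ∧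
    (∀ k l, 1 ≤ k → k ≤ p - q → 1 ≤ l → l ≤ q →
      ent X k (p - l + 1) = ent X k (p + l)) ∧
    (∀ i j, 1 ≤ i → i < j → j ≤ q →
      ent X (p + 1 - j) (p + 1 - i) = ent X (p + 1 - j) (p + i)) ∧
    (∀ i j, 1 ≤ i → i < j → j ≤ q →
      ent X (p + i) (p + j) = - ent X (p + 1 - i) (p + j))}

/-- The abelian factor `𝔞`, as a set of matrices: all entries vanish except the
pairs in positions `(p-l+1, p+l)` and `(p+l, p-l+1)`, `1 ≤ l ≤ q`, which are equal. -/
def aSet (p q : ℕ) : Set (Matrix (Fin (p + q)) (Fin (p + q)) ℝ) :=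
  {X | (∀ l, 1 ≤ l → l ≤ q → ent X (p - l + 1) (p + l) = ent X (p + l) (p - l + 1)) ∧
    (∀ i j, 1 ≤ i → i ≤ p + q → 1 ≤ j → j ≤ p + q →
      (¬ ∃ l, 1 ≤ l ∧ l ≤ q ∧ ((i = p - l + 1 ∧ j = p + l) ∨ (i = p + l ∧ j = p - l + 1))) →
      ent X i j = 0)}

/-- `𝔨₀`: skew-symmetric upper-left `(p-q)×(p-q)` block, all other entries zero. -/
def kSet (p q : ℕ) : Set (Matrix (Fin (p + q)) (Fin (p + q)) ℝ) :=
  {X | (∀ i j, 1 ≤ i → i ≤ p - q → 1 ≤ j → j ≤ p - q → ent X i j = - ent X j i) ∧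
    (∀ i j, 1 ≤ i → i ≤ p + q → 1 ≤ j → j ≤ p + q →
      ¬(i ≤ p - q ∧ j ≤ p - q) → ent X i j = 0)}

/-- The nilpotent Iwasawa factor `𝔫` as an `ℝ`-subspace of `M_{p+q}(ℝ)`. -/
def nSub (p q : ℕ) : Submodule ℝ (Matrix (Fin (p + q)) (Fin (p + q)) ℝ) where
  carrier := nSet p q
  zero_mem' := by
    refine ⟨soSet_zero p q, ?_, ?_, ?_, ?_, ?_⟩ <;> intros <;> simp [ent_zero]
  add_mem' := by
    rintro X Y ⟨h0, h1, h2, h3, h4, h5⟩ ⟨g0, g1, g2, g3, g4, g5⟩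
    refine ⟨soSet_add p q h0 g0, ?_, ?_, ?_, ?_, ?_⟩
    · intro i j hi hi' hj hj'
      rw [ent_add, h1 i j hi hi' hj hj', g1 i j hi hi' hj hj', add_zero]
    · intro l hl hl'
      rw [ent_add, h2 l hl hl', g2 l hl hl', add_zero]
    · intro k l hk hk' hl hl'
      rw [ent_add, ent_add, h3 k l hk hk' hl hl', g3 k l hk hk' hl hl']
    · intro i j hi hij hj
      rw [ent_add, ent_add, h4 i j hi hij hj, g4 i j hi hij hj]
    · intro i j hi hij hj
      rw [ent_add, ent_add, h5 i j hi hij hj, g5 i j hi hij hj]; ring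
  smul_mem' := by
    rintro c X ⟨h0, h1, h2, h3, h4, h5⟩
    refine ⟨soSet_smul p q c h0, ?_, ?_, ?_, ?_, ?_⟩
    · intro i j hi hi' hj hj'
      rw [ent_smul, h1 i j hi hi' hj hj', mul_zero]
    · intro l hl hl'
      rw [ent_smul, h2 l hl hl', mul_zero]
    · intro k l hk hk' hl hl'
      rw [ent_smul, ent_smul, h3 k l hk hk' hl hl']
    · intro i j hi hij hj
      rw [ent_smul, ent_smul, h4 i j hi hij hj]
    · intro i j hi hij hj
      rw [ent_smul, ent_smul, h5 i j hi hij hj]; ring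

/-- The abelian factor `𝔞` as an `ℝ`-subspace of `M_{p+q}(ℝ)`. -/
def aSub (p q : ℕ) : Submodule ℝ (Matrix (Fin (p + q)) (Fin (p + q)) ℝ) where
  carrier := aSet p q
  zero_mem' := by
    refine ⟨?_, ?_⟩ <;> intros <;> simp [ent_zero]
  add_mem' := by
    rintro X Y ⟨h1, h2⟩ ⟨g1, g2⟩
    refine ⟨?_, ?_⟩
    · intro l hl hl'
      rw [ent_add, ent_add, h1 l hl hl', g1 l hl hl']
    · intro i j hi hi' hj hj' hne
      rw [ent_add, h2 i j hi hi' hj hj' hne, g2 i j hi hi' hj hj' hne, add_zero]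
  smul_mem' := by
    rintro c X ⟨h1, h2⟩
    refine ⟨?_, ?_⟩
    · intro l hl hl'
      rw [ent_smul, ent_smul, h1 l hl hl']
    · intro i j hi hi' hj hj' hne
      rw [ent_smul, h2 i j hi hi' hj hj' hne, mul_zero]

/-- `𝔨₀` as an `ℝ`-subspace of `M_{p+q}(ℝ)`. -/
def kSub (p q : ℕ) : Submodule ℝ (Matrix (Fin (p + q)) (Fin (p + q)) ℝ) where
  carrier := kSet p q
  zero_mem' := by
    refine ⟨?_, ?_⟩ <;> intros <;> simp [ent_zero]
  add_mem' := by
    rintro X Y ⟨h1, h2⟩ ⟨g1, g2⟩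
    refine ⟨?_, ?_⟩
    · intro i j hi hi' hj hj'
      rw [ent_add, ent_add, h1 i j hi hi' hj hj', g1 i j hi hi' hj hj']; ring
    · intro i j hi hi' hj hj' hne
      rw [ent_add, h2 i j hi hi' hj hj' hne, g2 i j hi hi' hj hj' hne, add_zero]
  smul_mem' := by
    rintro c X ⟨h1, h2⟩
    refine ⟨?_, ?_⟩
    · intro i j hi hi' hj hj'
      rw [ent_smul, ent_smul, h1 i j hi hi' hj hj']; ring
    · intro i j hi hi' hj hj' hne
      rw [ent_smul, h2 i j hi hi' hj hj' hne, mul_zero]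

/-- The subspace `{X ∈ M_n(ℝ) : X x = 0}`. -/
def kerAt {n : ℕ} (x : Fin n → ℝ) : Submodule ℝ (Matrix (Fin n) (Fin n) ℝ) where
  carrier := {X | X *ᵥ x = 0}
  zero_mem' := by simp [Matrix.zero_mulVec]
  add_mem' := by
    intro X Y hX hY
    simp only [Set.mem_setOf_eq] at *
    rw [Matrix.add_mulVec, hX, hY, add_zero]
  smul_mem' := by
    intro c X hX
    simp only [Set.mem_setOf_eq] at *
    rw [Matrix.smul_mulVec, hX, smul_zero]

/-- The exponential of a matrix, as a unit of `M_n(ℝ)`, i.e. an element of `GL(n, ℝ)`. -/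
def expUnit {n : ℕ} (X : Matrix (Fin n) (Fin n) ℝ) : (Matrix (Fin n) (Fin n) ℝ)ˣ where
  val := NormedSpace.exp X
  inv := NormedSpace.exp (-X)
  val_inv := by
    rw [← Matrix.exp_add_of_commute X (-X) (Commute.neg_right (Commute.refl X)),
      add_neg_cancel, NormedSpace.exp_zero]
  inv_val := by
    rw [← Matrix.exp_add_of_commute (-X) X (Commute.neg_left (Commute.refl X)),
      neg_add_cancel, NormedSpace.exp_zero]

/-- The subgroup `N = exp(𝔫)` of `GL(p+q, ℝ)` generated by exponentials of elements of `𝔫`. -/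
def Ngrp (p q : ℕ) : Subgroup (Matrix (Fin (p + q)) (Fin (p + q)) ℝ)ˣ :=
  Subgroup.closure {g | ∃ X ∈ nSet p q, g = expUnit X}

/-- The subgroup `AN` of `GL(p+q, ℝ)` generated by exponentials of elements of `𝔞 ∪ 𝔫`. -/
def ANgrp (p q : ℕ) : Subgroup (Matrix (Fin (p + q)) (Fin (p + q)) ℝ)ˣ :=
  Subgroup.closure {g | ∃ X ∈ aSet p q ∪ nSet p q, g = expUnit X}

/-- The subgroup `Q = K₀AN` of `GL(p+q, ℝ)` generated by exponentials of `𝔨₀ ∪ 𝔞 ∪ 𝔫`. -/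
def Qgrp (p q : ℕ) : Subgroup (Matrix (Fin (p + q)) (Fin (p + q)) ℝ)ˣ :=
  Subgroup.closure {g | ∃ X ∈ kSet p q ∪ aSet p q ∪ nSet p q, g = expUnit X}

/-- The orbit `G(x)` of a point `x ∈ ℝ^n` under a subgroup `G` of `GL(n, ℝ)`. -/
def orb {n : ℕ} (G : Subgroup (Matrix (Fin n) (Fin n) ℝ)ˣ) (x : Fin n → ℝ) :
    Set (Fin n → ℝ) :=
  {v | ∃ g ∈ G, (g : Matrix (Fin n) (Fin n) ℝ) *ᵥ x = v}

end


/-!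
For `X ∈ 𝔫` the vector `X x` is tangent to the orbit `N x`, so the orbit dimension is the rank
of `X ↦ X x` on `𝔫`. Every `X ∈ 𝔰𝔬(p,q)` is skew for `⟨·,·⟩`, and every `X ∈ 𝔫` kills the null
vector `w₁ = e_p - e_{p+1}`; hence `X x` is orthogonal to both `x` and `w₁`. If `x` and `w₁` are
independent, the two functionals `⟨x, ·⟩`, `⟨w₁, ·⟩` are independent and the rank is at most
`p + q - 2`; otherwise `x` is a multiple of `w₁` and the rank is `0`. Rank–nullity together with
`dim 𝔫 ≥ q (p - 1)`, witnessed by one element of `𝔫` for each free entry of the block `B`, gives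
both inequalities.
-/

open Matrix Module

section LinearAlgebra

variable {K V W : Type*} [Field K] [AddCommGroup V] [Module K V] [AddCommGroup W] [Module K W]
  [FiniteDimensional K V]

lemma finrank_map_add_finrank_inf_ker (N : Submodule K V) (f : V →ₗ[K] W) :
    finrank K (N.map f) + finrank K ↥(N ⊓ LinearMap.ker f) = finrank K N := by
  rw [← LinearMap.range_domRestrict, ← (f.domRestrict N).finrank_range_add_finrank_ker,
    LinearMap.ker_domRestrict,
    ← (Submodule.comapSubtypeEquivOfLe (inf_le_left : N ⊓ LinearMap.ker f ≤ N)).finrank_eq,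
    Submodule.comap_inf, Submodule.comap_subtype_self, top_inf_eq]

lemma finrank_add_card_le_of_linearIndependent_dual {ι : Type*} [Fintype ι]
    {φ : ι → Dual K V} (hφ : LinearIndependent K φ) {U : Submodule K V}
    (hU : ∀ i, ∀ u ∈ U, φ i u = 0) :
    finrank K U + Fintype.card ι ≤ finrank K V := by
  let Φ := Submodule.span K (Set.range φ)
  have hle : U ≤ Φ.dualCoannihilator := by
    intro u hu
    rw [Submodule.mem_dualCoannihilator]
    intro ψ hψ
    induction hψ using Submodule.span_induction with
    | mem _ h => obtain ⟨i, rfl⟩ := h; exact hU i u hu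
    | zero => rfl
    | add _ _ _ _ h₁ h₂ => simp [h₁, h₂]
    | smul _ _ _ h => simp [h]
  have hΦ := Subspace.finrank_add_finrank_dualCoannihilator_eq Φ
  rw [finrank_span_eq_card hφ] at hΦ
  have := Submodule.finrank_mono hle
  omega

end LinearAlgebra

section ScalarProduct

lemma ip_eq_dotProduct {p q : ℕ} (x y : Fin (p + q) → ℝ) :
    ip p q x y = x ⬝ᵥ (Jmat p q *ᵥ y) := by
  simp only [ip, Jmat, mulVec_diagonal, dotProduct]
  exact Finset.sum_congr rfl fun i _ => by ring

def ipLeft (p q : ℕ) : (Fin (p + q) → ℝ) →ₗ[ℝ] Dual ℝ (Fin (p + q) → ℝ) :=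
  LinearMap.mk₂ ℝ (ip p q)
    (fun x x' y => by simp only [ip_eq_dotProduct, add_dotProduct])
    (fun c x y => by simp only [ip_eq_dotProduct, smul_dotProduct])
    (fun x y y' => by simp only [ip_eq_dotProduct, mulVec_add, dotProduct_add])
    (fun c x y => by simp only [ip_eq_dotProduct, mulVec_smul, dotProduct_smul])

variable {p q : ℕ}

lemma ipLeft_apply (x y : Fin (p + q) → ℝ) : ipLeft p q x y = ip p q x y := rfl

lemma ip_comm (x y : Fin (p + q) → ℝ) : ip p q x y = ip p q y x := by
  simp only [ip, mul_right_comm]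

lemma ker_ipLeft : LinearMap.ker (ipLeft p q) = ⊥ := by
  refine (Submodule.eq_bot_iff _).2 fun x hx => funext fun i => ?_
  have h := LinearMap.congr_fun hx (Pi.single i 1)
  simp only [ipLeft_apply, LinearMap.zero_apply, ip, Pi.single_apply, mul_ite, mul_one,
    mul_zero, Finset.sum_ite_eq', Finset.mem_univ, if_true] at h
  split_ifs at h <;> simpa using h

lemma ip_mulVec_left {X : Matrix (Fin (p + q)) (Fin (p + q)) ℝ} (hX : X ∈ soSet p q)
    (x y : Fin (p + q) → ℝ) : ip p q (X *ᵥ x) y = -ip p q x (X *ᵥ y) := by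
  have hJ : Xᵀ * Jmat p q = -(Jmat p q * X) := eq_neg_of_add_eq_zero_left hX
  rw [ip_eq_dotProduct, ip_eq_dotProduct, dotProduct_comm, dotProduct_mulVec,
    ← mulVec_transpose, mulVec_mulVec, hJ, neg_mulVec, ← mulVec_mulVec, neg_dotProduct,
    dotProduct_comm]

lemma ip_mulVec_self {X : Matrix (Fin (p + q)) (Fin (p + q)) ℝ} (hX : X ∈ soSet p q)
    (x : Fin (p + q) → ℝ) : ip p q x (X *ᵥ x) = 0 := by
  have h := ip_mulVec_left hX x x
  rw [ip_comm] at h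
  linarith

end ScalarProduct

section IwasawaN

variable {p q : ℕ} {X : Matrix (Fin (p + q)) (Fin (p + q)) ℝ}

lemma ent_add_one {n : ℕ} (X : Matrix (Fin n) (Fin n) ℝ) {a b : ℕ} (ha : a < n) (hb : b < n) :
    ent X (a + 1) (b + 1) = X ⟨a, ha⟩ ⟨b, hb⟩ := by
  simp only [ent, Nat.add_sub_cancel, dif_pos (And.intro ha hb)]

lemma stdE_add_one {n a : ℕ} (ha : a < n) : stdE n (a + 1) = Pi.single ⟨a, ha⟩ 1 := by
  funext j
  simp only [stdE, Pi.single_apply, Fin.ext_iff, Nat.add_right_cancel_iff]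

lemma soSet_iff_entries :
    X ∈ soSet p q ↔ ∀ a b : Fin (p + q),
      (if (a : ℕ) < p then (1 : ℝ) else -1) * X a b
        = -((if (b : ℕ) < p then (1 : ℝ) else -1) * X b a) := by
  simp only [soSet, Set.mem_ofPred_eq, ← Matrix.ext_iff, Matrix.add_apply, Matrix.zero_apply,
    Jmat, mul_diagonal, diagonal_mul, transpose_apply]
  exact forall₂_congr fun a b => by constructor <;> intro h <;> linarith

lemma soSet_ent_skew (hX : X ∈ soSet p q) {a b : ℕ} (ha : 1 ≤ a) (ha' : a ≤ p + q)
    (hb : 1 ≤ b) (hb' : b ≤ p + q) :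
    (if a ≤ p then (1 : ℝ) else -1) * ent X a b
      = -((if b ≤ p then (1 : ℝ) else -1) * ent X b a) := by
  obtain ⟨a, rfl⟩ := Nat.exists_eq_add_of_le' ha
  obtain ⟨b, rfl⟩ := Nat.exists_eq_add_of_le' hb
  rw [ent_add_one X (by omega) (by omega), ent_add_one X (by omega) (by omega)]
  simpa only [Nat.add_one_le_iff] using soSet_iff_entries.1 hX ⟨a, by omega⟩ ⟨b, by omega⟩

lemma nSet_ent_col_eq (hp : 1 ≤ p) (hq : 1 ≤ q) (hX : X ∈ nSet p q) {i : ℕ} (hi : 1 ≤ i)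
    (hi' : i ≤ p + q) : ent X i (p - 1 + 1) = ent X i (p + 1) := by
  obtain ⟨hso, -, h2, h3, h4, h5⟩ := hX
  have hp1 : p - 1 + 1 = p := by omega
  rw [hp1]
  have hAdiag := soSet_ent_skew hso (a := p) (b := p) (by omega) (by omega) (by omega) (by omega)
  have hDdiag := soSet_ent_skew hso (a := p + 1) (b := p + 1)
    (by omega) (by omega) (by omega) (by omega)
  have hB := soSet_ent_skew hso (a := p + 1) (b := p) (by omega) (by omega) (by omega) (by omega)
  have hzero : ent X p (p + 1) = 0 := by simpa only [hp1] using h2 1 le_rfl hq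
  simp only [le_refl, if_true, show ¬p + 1 ≤ p by omega, if_false] at hAdiag hDdiag hB
  rcases lt_trichotomy i p with hip | rfl | hip
  · by_cases hk : i ≤ p - q
    · simpa only [hp1] using h3 i 1 hi hk le_rfl hq
    · have h := h4 1 (p + 1 - i) le_rfl (by omega) (by omega)
      rwa [show p + 1 - (p + 1 - i) = i by omega, Nat.add_sub_cancel] at h
  · linarith
  rcases (Nat.succ_le_of_lt hip).eq_or_lt with rfl | hip
  · linarith
  have hBi := soSet_ent_skew hso (a := i) (b := p) (by omega) hi' (by omega) (by omega)
  have hDi := soSet_ent_skew hso (a := i) (b := p + 1) (by omega) hi' (by omega) (by omega)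
  have h := h5 1 (i - p) le_rfl (by omega) (by omega)
  rw [show p + (i - p) = i by omega, Nat.add_sub_cancel] at h
  simp only [show ¬i ≤ p by omega, le_refl, show ¬p + 1 ≤ p by omega, if_true, if_false]
    at hBi hDi
  linarith

lemma wVec_one_eq (hp : 1 ≤ p) (hq : 1 ≤ q) :
    wVec p q 1 = Pi.single ⟨p - 1, by omega⟩ 1 - Pi.single ⟨p, by omega⟩ 1 := by
  rw [wVec, stdE_add_one, stdE_add_one]

lemma wVec_one_ne_zero (hp : 1 ≤ p) (hq : 1 ≤ q) : wVec p q 1 ≠ 0 := by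
  intro h
  have := congrFun h ⟨p - 1, by omega⟩
  simp [wVec_one_eq hp hq, Fin.ext_iff, show p - 1 ≠ p by omega] at this

lemma nSet_mulVec_wVec_one (hp : 1 ≤ p) (hq : 1 ≤ q) (hX : X ∈ nSet p q) :
    X *ᵥ wVec p q 1 = 0 := by
  funext i
  have h := nSet_ent_col_eq hp hq hX (i := i + 1) (by omega) (by omega)
  rw [ent_add_one X i.isLt (by omega), ent_add_one X i.isLt (by omega)] at h
  simp [wVec_one_eq hp hq, mulVec_sub, h]

lemma ip_wVec_one_mulVec (hp : 1 ≤ p) (hq : 1 ≤ q) (hX : X ∈ nSet p q)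
    (y : Fin (p + q) → ℝ) : ip p q (wVec p q 1) (X *ᵥ y) = 0 := by
  rw [← neg_eq_zero, ← ip_mulVec_left hX.1, nSet_mulVec_wVec_one hp hq hX]
  simp [ip]

lemma kerAt_eq_ker {n : ℕ} (x : Fin n → ℝ) :
    kerAt x = LinearMap.ker ((mulVecBilin ℝ ℝ).flip x) := rfl

lemma finrank_map_mulVec_nSub_le (hp : 1 ≤ p) (hq : 1 ≤ q) (x : Fin (p + q) → ℝ) :
    finrank ℝ ((nSub p q).map ((mulVecBilin ℝ ℝ).flip x)) ≤ p + q - 2 := by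
  by_cases hwx : LinearIndependent ℝ ![wVec p q 1, x]
  · have h := finrank_add_card_le_of_linearIndependent_dual (hwx.map' _ ker_ipLeft)
      (U := (nSub p q).map ((mulVecBilin ℝ ℝ).flip x)) ?_
    · simp only [Fintype.card_fin, finrank_fin_fun] at h
      omega
    rintro i _ ⟨X, hX, rfl⟩
    fin_cases i
    · exact ip_wVec_one_mulVec hp hq hX x
    · exact ip_mulVec_self hX.1 x
  · obtain ⟨a, rfl⟩ : ∃ a : ℝ, a • wVec p q 1 = x := by
      simpa [LinearIndependent.pair_iff' (wVec_one_ne_zero hp hq)] using hwx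
    have hbot : (nSub p q).map ((mulVecBilin ℝ ℝ).flip (a • wVec p q 1)) = ⊥ := by
      refine eq_bot_iff.2 ?_
      rintro _ ⟨X, hX, rfl⟩
      simp [nSet_mulVec_wVec_one hp hq hX]
    rw [hbot, finrank_bot]
    exact Nat.zero_le _

end IwasawaN

section Basis

variable {p q : ℕ}

/-- With 0-based indices, the element of `𝔫` whose block `B` is the matrix unit at `(r, l)`:
the conditions defining `𝔫` force one more skew pair of entries, in `A` at `(r, p-1-l)` when
`r < p-1-l`, and in `D` at `(l, p-1-r)` when `r > p-1-l`. -/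
def nBasis (p q r l : ℕ) : Matrix (Fin (p + q)) (Fin (p + q)) ℝ :=
  if r + l + 1 < p then
    of fun i j =>
      (if (i : ℕ) = r ∧ (j : ℕ) = p + l then 1 else 0)
        + (if (i : ℕ) = p + l ∧ (j : ℕ) = r then 1 else 0)
        + (if (i : ℕ) = r ∧ (j : ℕ) = p - 1 - l then 1 else 0)
        - (if (i : ℕ) = p - 1 - l ∧ (j : ℕ) = r then 1 else 0)
  else
    of fun i j =>
      (if (i : ℕ) = r ∧ (j : ℕ) = p + l then 1 else 0)
        + (if (i : ℕ) = p + l ∧ (j : ℕ) = r then 1 else 0)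
        + (if (i : ℕ) = p + l ∧ (j : ℕ) = 2 * p - 1 - r then 1 else 0)
        - (if (i : ℕ) = 2 * p - 1 - r ∧ (j : ℕ) = p + l then 1 else 0)

lemma nBasis_mem (hpq : q ≤ p) {r l : ℕ} (hr : r < p) (hl : l < q) (hrl : r + l + 1 ≠ p) :
    nBasis p q r l ∈ nSub p q := by
  unfold nBasis
  split_ifs <;>
    refine ⟨soSet_iff_entries.2 ?_, ?_, ?_, ?_, ?_, ?_⟩ <;> intros <;>
    simp (disch := omega) only [ent, dif_pos, of_apply] <;> grind (splits := 40)

/-- The `t`-th row of column `l` of `B` (0-based) that is free on `𝔫`: row `p-1-l` is skipped,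
since there `B` vanishes. -/
def basisRow (p l t : ℕ) : ℕ := if t < p - 1 - l then t else t + 1

lemma basisRow_lt {l t : ℕ} (ht : t < p - 1) : basisRow p l t < p := by
  unfold basisRow; split_ifs <;> omega

lemma basisRow_add_ne (l t : ℕ) : basisRow p l t + l + 1 ≠ p := by
  unfold basisRow; split_ifs <;> omega

lemma basisRow_inj {l t t' : ℕ} : basisRow p l t = basisRow p l t' ↔ t = t' := by
  unfold basisRow; split_ifs <;> omega

def nCoord (p q : ℕ) :
    Matrix (Fin (p + q)) (Fin (p + q)) ℝ →ₗ[ℝ] (Fin q × Fin (p - 1) → ℝ) where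
  toFun X lt :=
    X ⟨basisRow p lt.1 lt.2, (basisRow_lt lt.2.isLt).trans_le (p.le_add_right q)⟩
      ⟨p + lt.1, by omega⟩
  map_add' _ _ := rfl
  map_smul' _ _ := rfl

lemma nCoord_apply (X : Matrix (Fin (p + q)) (Fin (p + q)) ℝ) (l : Fin q) (t : Fin (p - 1)) :
    nCoord p q X (l, t) =
      X ⟨basisRow p l t, (basisRow_lt t.isLt).trans_le (p.le_add_right q)⟩
        ⟨p + l, by omega⟩ :=
  rfl

lemma nCoord_nBasis (l : Fin q) (t : Fin (p - 1)) :
    nCoord p q (nBasis p q (basisRow p l t) l) = Pi.single (l, t) 1 := by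
  funext ⟨l', t'⟩
  have := basisRow_lt (p := p) (l := l) t.isLt
  have := basisRow_lt (p := p) (l := l') t'.isLt
  have := basisRow_add_ne (p := p) l t
  have := basisRow_inj (p := p) (l := l) (t := t) (t' := t')
  rw [nCoord_apply]
  simp only [Pi.single_apply, Prod.ext_iff, Fin.ext_iff]
  unfold nBasis
  split_ifs <;> simp only [of_apply] <;> grind

lemma le_finrank_nSub (hpq : q ≤ p) : q * (p - 1) ≤ finrank ℝ (nSub p q) := by
  have hli : LinearIndependent ℝ fun lt : Fin q × Fin (p - 1) =>
      (⟨nBasis p q (basisRow p lt.1 lt.2) lt.1,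
        nBasis_mem hpq (basisRow_lt lt.2.isLt) lt.1.isLt (basisRow_add_ne _ _)⟩ : nSub p q) := by
    refine LinearIndependent.of_comp ((nCoord p q).comp (nSub p q).subtype) ?_
    simpa only [Function.comp_def, LinearMap.comp_apply, Submodule.subtype_apply, nCoord_nBasis]
      using Pi.linearIndependent_single_one (Fin q × Fin (p - 1)) ℝ
  simpa using hli.fintype_card_le_finrank

end Basis

/-- For every `x ∈ ℝ^{p+q}` one has `dim 𝔫_x ≥ q(p-1) - (p+q-2)`;
equivalently, every orbit of `N = exp 𝔫` has dimension `dim 𝔫 - dim 𝔫_x ≤ p+q-2`,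
so the action of `N` on `ℝ^{p,q}` is not of cohomogeneity one. -/
theorem nSub_stabilizer_dim_ge (p q : ℕ) (hq : 1 ≤ q) (hpq : q ≤ p)
    (x : Fin (p + q) → ℝ) :
    q * (p - 1) - (p + q - 2) ≤ Module.finrank ℝ ↥(nSub p q ⊓ kerAt x) ∧
    Module.finrank ℝ ↥(nSub p q) - Module.finrank ℝ ↥(nSub p q ⊓ kerAt x) ≤ p + q - 2 := by
  have hrank := finrank_map_add_finrank_inf_ker (nSub p q) ((mulVecBilin ℝ ℝ).flip x)
  rw [← kerAt_eq_ker] at hrank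
  have horbit := finrank_map_mulVec_nSub_le (hq.trans hpq) hq x
  have hdim := le_finrank_nSub hpq
  omega
end

section
/- Assume p > q. Let x ∈ ℝ^{p+q} satisfy x^{p−i+1} + x^{p+i} = 0 for all 1 ≤ i ≤ q and x^j ≠ 0 for some 1 ≤ j ≤ p−q. Then dim 𝔫_x = q(p−2); equivalently, dim 𝔫 − dim 𝔫_x = q. -/
open Matrix

/-!
An element of `𝔫` is determined by `q (p - 1)` free entries: for each `1 ≤ l ≤ q`, the entries
of column `p + 1 - l` of `A` above the diagonal and those of column `l` of `B` below the
antidiagonal. The relations defining `𝔫` and `𝔰𝔬(p,q)` express every other entry through them,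
so `dim 𝔫 = q (p - 1)`.

The hypothesis says that `x` is odd under the reflection `e_{p+1-i} ↔ e_{p+i}`, which fixes
`e_1, …, e_{p-q}`. For `X ∈ 𝔫`, each of the first `p - q` rows of `X`, and each sum of the rows
`p + 1 - l` and `p + l`, is even under this reflection and vanishes on the fixed coordinates, so
it is orthogonal to `x`. Hence `X x = 0` as soon as the last `q` coordinates of `X x` vanish.
As a linear function of `X ∈ 𝔫` these `q` coordinates are onto `ℝ^q`, because the parameters
in row `j` of `A` enter them with coefficient `x^j ≠ 0`. Rank–nullity gives
`dim 𝔫_x = q (p - 1) - q`.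
-/

lemma ent_eq_apply {n : ℕ} (X : Matrix (Fin n) (Fin n) ℝ) {r c : ℕ} (i j : Fin n)
    (hr : r = i + 1) (hc : c = j + 1) : ent X r c = X i j := by
  subst hr hc
  simp [ent]

lemma vent_eq_apply {n : ℕ} (x : Fin n → ℝ) {r : ℕ} (i : Fin n) (hr : r = i + 1) :
    vent x r = x i := by
  subst hr
  simp [vent]

namespace IwasawaNilradical

variable {p q : ℕ}

section soSet

variable {X : Matrix (Fin (p + q)) (Fin (p + q)) ℝ}

lemma signed_ent_add_signed_ent_eq_zero (hX : X ∈ soSet p q) {r c : ℕ} (hr : 1 ≤ r)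
    (hr' : r ≤ p + q) (hc : 1 ≤ c) (hc' : c ≤ p + q) :
    (if r ≤ p then (1 : ℝ) else -1) * ent X r c + (if c ≤ p then (1 : ℝ) else -1) * ent X c r
      = 0 := by
  have h := congrFun (congrFun hX ⟨c - 1, by omega⟩) ⟨r - 1, by omega⟩
  simp only [Jmat, Matrix.add_apply, mul_diagonal, diagonal_mul, transpose_apply,
    Matrix.zero_apply] at h
  rw [ent, dif_pos ⟨by omega, by omega⟩, ent, dif_pos ⟨by omega, by omega⟩]
  split_ifs at h ⊢ <;> first | omega | linarith

lemma ent_eq_neg_of_mem_soSet_of_le (hX : X ∈ soSet p q) {r c : ℕ} (hr : 1 ≤ r) (hr' : r ≤ p)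
    (hc : 1 ≤ c) (hc' : c ≤ p) : ent X r c = - ent X c r := by
  have h := signed_ent_add_signed_ent_eq_zero hX hr (by omega) hc (by omega)
  rw [if_pos hr', if_pos hc'] at h
  linarith

lemma ent_eq_neg_of_mem_soSet_of_gt (hX : X ∈ soSet p q) {r c : ℕ} (hr : p < r)
    (hr' : r ≤ p + q) (hc : p < c) (hc' : c ≤ p + q) : ent X r c = - ent X c r := by
  have h := signed_ent_add_signed_ent_eq_zero hX (by omega) hr' (by omega) hc'
  rw [if_neg (by omega), if_neg (by omega)] at h
  linarith

lemma ent_eq_of_mem_soSet (hX : X ∈ soSet p q) {r c : ℕ} (hr : 1 ≤ r) (hr' : r ≤ p)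
    (hc : p < c) (hc' : c ≤ p + q) : ent X r c = ent X c r := by
  have h := signed_ent_add_signed_ent_eq_zero hX hr (by omega) (by omega) hc'
  rw [if_pos hr', if_neg (by omega)] at h
  linarith

lemma ent_self_eq_zero_of_mem_soSet (hX : X ∈ soSet p q) {r : ℕ} (hr : 1 ≤ r)
    (hr' : r ≤ p + q) : ent X r r = 0 := by
  have h := signed_ent_add_signed_ent_eq_zero hX hr hr' hr hr'
  split_ifs at h <;> linarith

end soSet

/-- The parameter placed at the 1-based position `(r, c)`: `f l m` (with `l`, `m` 0-based) sits
at `(m + 1, p - l)` in `A` if `m + l + 2 ≤ p`, and at `(2p - m - l - 1, p + l + 1)` otherwise. -/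
def param (f : Fin q → Fin (p - 1) → ℝ) (r c : ℕ) : ℝ :=
  if h : 1 ≤ r ∧ r < c ∧ c ≤ p ∧ p < c + q then f ⟨p - c, by omega⟩ ⟨r - 1, by omega⟩
  else if h' : q ≤ p ∧ 1 ≤ r ∧ r ≤ p ∧ p < c ∧ c ≤ p + q ∧ 2 * p + 1 < r + c then
    f ⟨c - p - 1, by omega⟩ ⟨3 * p - c - r, by omega⟩
  else 0

lemma param_eq_zero (f : Fin q → Fin (p - 1) → ℝ) {r c : ℕ}
    (h : ¬ (1 ≤ r ∧ r < c ∧ c ≤ p ∧ p < c + q))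
    (h' : ¬ (q ≤ p ∧ 1 ≤ r ∧ r ≤ p ∧ p < c ∧ c ≤ p + q ∧ 2 * p + 1 < r + c)) :
    param f r c = 0 := by
  rw [param, dif_neg h, dif_neg h']

lemma param_of_lt (f : Fin q → Fin (p - 1) → ℝ) {r c : ℕ}
    (h : 1 ≤ r ∧ r < c ∧ c ≤ p ∧ p < c + q) :
    param f r c = f ⟨p - c, by omega⟩ ⟨r - 1, by omega⟩ := by
  rw [param, dif_pos h]

lemma param_of_gt (f : Fin q → Fin (p - 1) → ℝ) {r c : ℕ}
    (h : q ≤ p ∧ 1 ≤ r ∧ r ≤ p ∧ p < c ∧ c ≤ p + q ∧ 2 * p + 1 < r + c) :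
    param f r c = f ⟨c - p - 1, by omega⟩ ⟨3 * p - c - r, by omega⟩ := by
  rw [param, dif_neg (by omega), dif_pos h]

lemma param_add (f g : Fin q → Fin (p - 1) → ℝ) (r c : ℕ) :
    param (f + g) r c = param f r c + param g r c := by
  unfold param; split_ifs <;> simp

lemma param_smul (a : ℝ) (f : Fin q → Fin (p - 1) → ℝ) (r c : ℕ) :
    param (a • f) r c = a * param f r c := by
  unfold param; split_ifs <;> simp

/-- The relations of `𝔫` force `B_{r,l} = A_{r,p+1-l}` above the antidiagonal and
`D_{ij} = -B_{p+1-i,j}` for `i < j`; with the skew-symmetry of `A` and `D` this fills in every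
entry from the parameters. -/
def entry (f : Fin q → Fin (p - 1) → ℝ) (r c : ℕ) : ℝ :=
  if r ≤ p ∧ c ≤ p then param f r c - param f c r
  else if r ≤ p then param f r c + param f r (2 * p + 1 - c)
  else if c ≤ p then param f c r + param f c (2 * p + 1 - r)
  else param f (2 * p + 1 - c) r - param f (2 * p + 1 - r) c

lemma entry_of_le_of_le (f : Fin q → Fin (p - 1) → ℝ) {r c : ℕ} (hr : r ≤ p) (hc : c ≤ p) :
    entry f r c = param f r c - param f c r := by
  rw [entry, if_pos ⟨hr, hc⟩]

lemma entry_of_le_of_gt (f : Fin q → Fin (p - 1) → ℝ) {r c : ℕ} (hr : r ≤ p) (hc : p < c) :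
    entry f r c = param f r c + param f r (2 * p + 1 - c) := by
  rw [entry, if_neg (by omega), if_pos hr]

lemma entry_of_gt_of_le (f : Fin q → Fin (p - 1) → ℝ) {r c : ℕ} (hr : p < r) (hc : c ≤ p) :
    entry f r c = param f c r + param f c (2 * p + 1 - r) := by
  rw [entry, if_neg (by omega), if_neg (by omega), if_pos hc]

lemma entry_of_gt_of_gt (f : Fin q → Fin (p - 1) → ℝ) {r c : ℕ} (hr : p < r) (hc : p < c) :
    entry f r c = param f (2 * p + 1 - c) r - param f (2 * p + 1 - r) c := by
  rw [entry, if_neg (by omega), if_neg (by omega), if_neg (by omega)]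

def ofParams (p q : ℕ) :
    (Fin q → Fin (p - 1) → ℝ) →ₗ[ℝ] Matrix (Fin (p + q)) (Fin (p + q)) ℝ where
  toFun f := Matrix.of fun i j => entry f (i + 1) (j + 1)
  map_add' f g := by
    ext i j
    simp only [entry, param_add, of_apply, Matrix.add_apply]
    split_ifs <;> ring
  map_smul' a f := by
    ext i j
    simp only [entry, param_smul, of_apply, Matrix.smul_apply, smul_eq_mul, RingHom.id_apply]
    split_ifs <;> ring

lemma ent_ofParams (f : Fin q → Fin (p - 1) → ℝ) {r c : ℕ} (hr : 1 ≤ r) (hr' : r ≤ p + q)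
    (hc : 1 ≤ c) (hc' : c ≤ p + q) : ent (ofParams p q f) r c = entry f r c := by
  rw [ent, dif_pos ⟨by omega, by omega⟩]
  simp only [ofParams, LinearMap.coe_mk, AddHom.coe_mk, of_apply]
  congr 1 <;> omega

lemma ofParams_mem_soSet (f : Fin q → Fin (p - 1) → ℝ) : ofParams p q f ∈ soSet p q := by
  ext a b
  simp only [Jmat, ofParams, entry, LinearMap.coe_mk, AddHom.coe_mk, Matrix.add_apply,
    mul_diagonal, diagonal_mul, transpose_apply, of_apply, Matrix.zero_apply]
  split_ifs <;> first | omega | ring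

lemma ofParams_mem_nSet (hqp : q ≤ p) (f : Fin q → Fin (p - 1) → ℝ) :
    ofParams p q f ∈ nSet p q := by
  refine ⟨ofParams_mem_soSet f, ?_, ?_, ?_, ?_, ?_⟩
  · intro i j _ _ _ _
    rw [ent_ofParams f (by omega) (by omega) (by omega) (by omega),
      entry_of_le_of_le f (by omega) (by omega), param_eq_zero f (by omega) (by omega),
      param_eq_zero f (by omega) (by omega), sub_zero]
  · intro l _ _
    rw [ent_ofParams f (by omega) (by omega) (by omega) (by omega),
      entry_of_le_of_gt f (by omega) (by omega), param_eq_zero f (by omega) (by omega),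
      param_eq_zero f (by omega) (by omega), add_zero]
  · intro k l _ _ _ _
    rw [ent_ofParams f (by omega) (by omega) (by omega) (by omega),
      ent_ofParams f (by omega) (by omega) (by omega) (by omega),
      entry_of_le_of_le f (by omega) (by omega), entry_of_le_of_gt f (by omega) (by omega),
      param_eq_zero f (r := p - l + 1) (by omega) (by omega),
      param_eq_zero f (c := p + l) (by omega) (by omega),
      param_of_lt f (by omega), param_of_lt f (by omega), sub_zero, zero_add]
    congr 2; omega
  · intro i j _ _ _
    rw [ent_ofParams f (by omega) (by omega) (by omega) (by omega),
      ent_ofParams f (by omega) (by omega) (by omega) (by omega),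
      entry_of_le_of_le f (by omega) (by omega), entry_of_le_of_gt f (by omega) (by omega),
      param_eq_zero f (r := p + 1 - i) (by omega) (by omega),
      param_eq_zero f (c := p + i) (by omega) (by omega),
      param_of_lt f (by omega), param_of_lt f (by omega), sub_zero, zero_add]
    congr 2; omega
  · intro i j _ _ _
    rw [ent_ofParams f (by omega) (by omega) (by omega) (by omega),
      ent_ofParams f (by omega) (by omega) (by omega) (by omega),
      entry_of_gt_of_gt f (by omega) (by omega), entry_of_le_of_gt f (by omega) (by omega),
      param_eq_zero f (r := 2 * p + 1 - (p + j)) (by omega) (by omega),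
      param_eq_zero f (r := p + 1 - i) (c := 2 * p + 1 - (p + j)) (by omega) (by omega),
      param_of_gt f (r := 2 * p + 1 - (p + i)) (by omega),
      param_of_gt f (r := p + 1 - i) (by omega), zero_sub, add_zero]
    congr 3; omega

def toParams (X : Matrix (Fin (p + q)) (Fin (p + q)) ℝ) : Fin q → Fin (p - 1) → ℝ :=
  fun l m => if (m : ℕ) + l + 2 ≤ p then ent X (m + 1) (p - l)
    else ent X (2 * p - m - l - 1) (p + l + 1)

lemma toParams_ofParams (hqp : q ≤ p) (f : Fin q → Fin (p - 1) → ℝ) :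
    toParams (ofParams p q f) = f := by
  funext l m
  have hl := l.isLt
  have hm := m.isLt
  by_cases h : (m : ℕ) + l + 2 ≤ p
  · rw [toParams, if_pos h, ent_ofParams f (by omega) (by omega) (by omega) (by omega),
      entry_of_le_of_le f (by omega) (by omega), param_eq_zero f (c := m + 1) (by omega) (by omega),
      param_of_lt f (by omega), sub_zero]
    congr 2; omega
  · rw [toParams, if_neg h, ent_ofParams f (by omega) (by omega) (by omega) (by omega),
      entry_of_le_of_gt f (by omega) (by omega),
      param_eq_zero f (c := 2 * p + 1 - (p + l + 1)) (by omega) (by omega),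
      param_of_gt f (by omega), add_zero]
    congr 2 <;> omega

lemma param_toParams (X : Matrix (Fin (p + q)) (Fin (p + q)) ℝ) {r c : ℕ}
    (h : (1 ≤ r ∧ r < c ∧ c ≤ p ∧ p < c + q) ∨
      (q ≤ p ∧ 1 ≤ r ∧ r ≤ p ∧ p < c ∧ c ≤ p + q ∧ 2 * p + 1 < r + c)) :
    param (toParams X) r c = ent X r c := by
  rcases h with h | h
  · rw [param_of_lt _ h]
    dsimp only [toParams]
    rw [if_pos (by omega)]
    congr 1 <;> omega
  · rw [param_of_gt _ h]
    dsimp only [toParams]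
    rw [if_neg (by omega)]
    congr 1 <;> omega

section toParams

variable {X : Matrix (Fin (p + q)) (Fin (p + q)) ℝ}

lemma entry_toParams_of_le_of_le (hqp : q ≤ p) (hX : X ∈ nSet p q) {r c : ℕ} (hr : 1 ≤ r)
    (hr' : r ≤ p) (hc : 1 ≤ c) (hc' : c ≤ p) : entry (toParams X) r c = ent X r c := by
  obtain ⟨hso, hAA, -, -, -, -⟩ := hX
  rw [entry_of_le_of_le _ hr' hc']
  rcases Nat.lt_trichotomy r c with h | rfl | h
  · rw [param_eq_zero _ (r := c) (by omega) (by omega), sub_zero]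
    by_cases hcq : p < c + q
    · exact param_toParams X (Or.inl ⟨hr, h, hc', hcq⟩)
    · rw [param_eq_zero _ (by omega) (by omega), hAA r c hr (by omega) hc (by omega)]
  · rw [sub_self, ent_self_eq_zero_of_mem_soSet hso hr (by omega)]
  · rw [param_eq_zero _ (r := r) (by omega) (by omega),
      ent_eq_neg_of_mem_soSet_of_le hso hr hr' hc hc', zero_sub]
    by_cases hrq : p < r + q
    · rw [param_toParams X (Or.inl ⟨hc, h, hr', hrq⟩)]
    · rw [param_eq_zero _ (by omega) (by omega), hAA c r hc (by omega) hr (by omega), neg_zero]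

lemma entry_toParams_of_le_of_gt (hqp : q ≤ p) (hX : X ∈ nSet p q) {r c : ℕ} (hr : 1 ≤ r)
    (hr' : r ≤ p) (hc : p < c) (hc' : c ≤ p + q) : entry (toParams X) r c = ent X r c := by
  obtain ⟨-, -, hBdiag, hAB, hAB', -⟩ := hX
  rw [entry_of_le_of_gt _ hr' hc]
  rcases Nat.lt_trichotomy (r + c) (2 * p + 1) with h | h | h
  · rw [param_eq_zero _ (r := r) (c := c) (by omega) (by omega),
      param_toParams X (Or.inl ⟨hr, by omega, by omega, by omega⟩), zero_add]
    by_cases hrq : r ≤ p - q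
    · have e := hAB r (c - p) hr hrq (by omega) (by omega)
      rwa [show p - (c - p) + 1 = 2 * p + 1 - c by omega, show p + (c - p) = c by omega] at e
    · have e := hAB' (c - p) (p + 1 - r) (by omega) (by omega) (by omega)
      rwa [show p + 1 - (p + 1 - r) = r by omega, show p + 1 - (c - p) = 2 * p + 1 - c by omega,
        show p + (c - p) = c by omega] at e
  · rw [param_eq_zero _ (r := r) (c := c) (by omega) (by omega),
      param_eq_zero _ (r := r) (c := 2 * p + 1 - c) (by omega) (by omega), add_zero]
    have e := hBdiag (c - p) (by omega) (by omega)
    rw [show p - (c - p) + 1 = r by omega, show p + (c - p) = c by omega] at e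
    rw [e]
  · rw [param_toParams X (Or.inr ⟨hqp, hr, hr', hc, hc', h⟩),
      param_eq_zero _ (r := r) (c := 2 * p + 1 - c) (by omega) (by omega), add_zero]

lemma entry_toParams_of_gt_of_gt (hqp : q ≤ p) (hX : X ∈ nSet p q) {r c : ℕ} (hr : p < r)
    (hr' : r ≤ p + q) (hc : p < c) (hc' : c ≤ p + q) : entry (toParams X) r c = ent X r c := by
  obtain ⟨hso, -, -, -, -, hDB⟩ := hX
  rw [entry_of_gt_of_gt _ hr hc]
  rcases Nat.lt_trichotomy r c with h | rfl | h
  · rw [param_eq_zero _ (r := 2 * p + 1 - c) (c := r) (by omega) (by omega), zero_sub,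
      param_toParams X (Or.inr ⟨hqp, by omega, by omega, hc, hc', by omega⟩)]
    have e := hDB (r - p) (c - p) (by omega) (by omega) (by omega)
    rw [show p + (r - p) = r by omega, show p + (c - p) = c by omega,
      show p + 1 - (r - p) = 2 * p + 1 - r by omega] at e
    rw [e]
  · rw [sub_self, ent_self_eq_zero_of_mem_soSet hso (by omega) hr']
  · rw [param_eq_zero _ (r := 2 * p + 1 - r) (c := c) (by omega) (by omega), sub_zero,
      param_toParams X (Or.inr ⟨hqp, by omega, by omega, hr, hr', by omega⟩),
      ent_eq_neg_of_mem_soSet_of_gt hso hr hr' hc hc']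
    have e := hDB (c - p) (r - p) (by omega) (by omega) (by omega)
    rw [show p + (c - p) = c by omega, show p + (r - p) = r by omega,
      show p + 1 - (c - p) = 2 * p + 1 - c by omega] at e
    rw [e, neg_neg]

lemma ofParams_toParams (hqp : q ≤ p) (hX : X ∈ nSet p q) : ofParams p q (toParams X) = X := by
  ext i j
  have key : entry (toParams X) (i + 1) (j + 1) = ent X (i + 1) (j + 1) := by
    rcases le_or_gt ((i : ℕ) + 1) p with hi | hi <;> rcases le_or_gt ((j : ℕ) + 1) p with hj | hj
    · exact entry_toParams_of_le_of_le hqp hX (by omega) hi (by omega) hj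
    · exact entry_toParams_of_le_of_gt hqp hX (by omega) hi hj (by omega)
    · rw [entry_of_gt_of_le _ hi hj, ← ent_eq_of_mem_soSet hX.1 (by omega) hj hi (by omega),
        ← entry_of_le_of_gt _ hj hi]
      exact entry_toParams_of_le_of_gt hqp hX (by omega) hj hi (by omega)
    · exact entry_toParams_of_gt_of_gt hqp hX hi (by omega) hj (by omega)
  rwa [← ent_ofParams _ (by omega) (by omega) (by omega) (by omega), ent_eq_apply _ i j rfl rfl,
    ent_eq_apply _ i j rfl rfl] at key

noncomputable def paramsEquiv (hqp : q ≤ p) : (Fin q → Fin (p - 1) → ℝ) ≃ₗ[ℝ] nSub p q :=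
  LinearEquiv.ofBijective ((ofParams p q).codRestrict (nSub p q) (ofParams_mem_nSet hqp))
    ⟨fun f g h => by
      rw [← toParams_ofParams hqp f, ← toParams_ofParams hqp g]
      exact congrArg (fun X : nSub p q => toParams X.1) h,
     fun X => ⟨toParams X.1, Subtype.ext (ofParams_toParams hqp X.2)⟩⟩

lemma finrank_nSub (hqp : q ≤ p) : Module.finrank ℝ (nSub p q) = q * (p - 1) := by
  rw [← (paramsEquiv hqp).finrank_eq, Module.finrank_pi_fintype]
  simp

end toParams

/-- The reflection `e_{p+1-i} ↔ e_{p+i}` on 0-based indices, fixing the first `p - q`. -/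
def mirror (p q : ℕ) (a : Fin (p + q)) : Fin (p + q) :=
  if h : (a : ℕ) < p - q then a else ⟨2 * p - 1 - a, by omega⟩

lemma val_mirror {a : Fin (p + q)} (ha : p - q ≤ a) : (mirror p q a : ℕ) = 2 * p - 1 - a := by
  rw [mirror, dif_neg (by omega)]

lemma mirror_of_lt {a : Fin (p + q)} (ha : (a : ℕ) < p - q) : mirror p q a = a := by
  rw [mirror, dif_pos ha]

lemma mirror_involutive (hqp : q ≤ p) : Function.Involutive (mirror p q) := by
  intro a
  ext
  by_cases ha : (a : ℕ) < p - q
  · simp only [mirror, dif_pos ha]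
  · rw [val_mirror (by rw [val_mirror (by omega)]; omega), val_mirror (by omega)]
    omega

lemma rel_mirror_of_lower_half (hqp : q ≤ p) {R : Fin (p + q) → Fin (p + q) → Prop}
    (hR : ∀ a b, R a b → R b a) (h : ∀ c : Fin (p + q), p - q ≤ c → c < p → R (mirror p q c) c)
    (c : Fin (p + q)) (hc : p - q ≤ c) : R (mirror p q c) c := by
  by_cases hcp : (c : ℕ) < p
  · exact h c hc hcp
  · have h' := h (mirror p q c) (by rw [val_mirror hc]; omega) (by rw [val_mirror hc]; omega)
    rw [mirror_involutive hqp] at h'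
    exact hR _ _ h'

lemma apply_mirror_of_lower_half (hqp : q ≤ p) {v : Fin (p + q) → ℝ}
    (h : ∀ c : Fin (p + q), p - q ≤ c → c < p → v (mirror p q c) = v c) (c : Fin (p + q)) :
    v (mirror p q c) = v c := by
  by_cases hc : (c : ℕ) < p - q
  · rw [mirror_of_lt hc]
  · exact rel_mirror_of_lower_half hqp (R := fun a b => v a = v b) (fun a b h => h.symm) h c
      (by omega)

lemma sum_mul_eq_zero_of_mirror (hqp : q ≤ p) {v x : Fin (p + q) → ℝ}
    (hv₀ : ∀ c : Fin (p + q), (c : ℕ) < p - q → v c = 0) (hv : ∀ c, v (mirror p q c) = v c)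
    (hx : ∀ c : Fin (p + q), p - q ≤ c → x (mirror p q c) = - x c) :
    ∑ c, v c * x c = 0 := by
  have hσ : ∀ c, v (mirror p q c) * x (mirror p q c) = - (v c * x c) := fun c => by
    by_cases hc : (c : ℕ) < p - q
    · simp [hv₀ c hc, hv]
    · rw [hv, hx c (by omega), mul_neg]
  have h := Equiv.sum_comp ((mirror_involutive hqp).toPerm _) fun c => v c * x c
  simp only [Function.Involutive.coe_toPerm, hσ, Finset.sum_neg_distrib] at h
  linarith

lemma apply_mirror_eq_neg_of_vent (hqp : q ≤ p) {x : Fin (p + q) → ℝ}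
    (hx : ∀ i, 1 ≤ i → i ≤ q → vent x (p - i + 1) + vent x (p + i) = 0)
    (c : Fin (p + q)) (hc : p - q ≤ c) : x (mirror p q c) = - x c := by
  refine rel_mirror_of_lower_half hqp (R := fun a b => x a = - x b) (fun a b h => by linarith)
    (fun c hc hc' => ?_) c hc
  have e := hx (p - c) (by omega) (by omega)
  rw [vent_eq_apply x c (by omega), vent_eq_apply x (mirror p q c) (by rw [val_mirror hc]; omega)]
    at e
  linarith

section rows

variable {X : Matrix (Fin (p + q)) (Fin (p + q)) ℝ}

lemma apply_mirror_of_mem_nSet (hqp : q ≤ p) (hX : X ∈ nSet p q) {r : Fin (p + q)}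
    (hr : (r : ℕ) < p - q) (c : Fin (p + q)) : X r (mirror p q c) = X r c := by
  refine apply_mirror_of_lower_half hqp (v := X r) (fun c hc hc' => ?_) c
  have e := hX.2.2.2.1 (r + 1) (p - c) (by omega) (by omega) (by omega) (by omega)
  rw [ent_eq_apply X r c rfl (by omega),
    ent_eq_apply X r (mirror p q c) rfl (by rw [val_mirror hc]; omega)] at e
  exact e.symm

lemma ent_add_ent_eq_of_mem_nSet (hqp : q ≤ p) (hX : X ∈ nSet p q) {l i : ℕ} (hl : 1 ≤ l)
    (hl' : l ≤ q) (hi : 1 ≤ i) (hi' : i ≤ q) :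
    ent X (p - l + 1) (p + 1 - i) + ent X (p + l) (p + 1 - i)
      = ent X (p - l + 1) (p + i) + ent X (p + l) (p + i) := by
  obtain ⟨hso, -, hBdiag, -, hAB', hDB⟩ := hX
  rw [show p - l + 1 = p + 1 - l by omega]
  rcases Nat.lt_trichotomy i l with h | rfl | h
  · have e₁ := hAB' i l hi h hl'
    have e₂ := hDB i l hi h hl'
    have e₃ := ent_eq_of_mem_soSet hso (r := p + 1 - i) (c := p + l) (by omega) (by omega)
      (by omega) (by omega)
    have e₄ := ent_eq_neg_of_mem_soSet_of_gt hso (r := p + l) (c := p + i) (by omega) (by omega)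
      (by omega) (by omega)
    linarith
  · have e₁ := ent_self_eq_zero_of_mem_soSet hso (r := p + 1 - i) (by omega) (by omega)
    have e₂ := ent_self_eq_zero_of_mem_soSet hso (r := p + i) (by omega) (by omega)
    have e₃ := hBdiag i hi hi'
    rw [show p - i + 1 = p + 1 - i by omega] at e₃
    have e₄ := ent_eq_of_mem_soSet hso (r := p + 1 - i) (c := p + i) (by omega) (by omega)
      (by omega) (by omega)
    linarith
  · have e₁ := ent_eq_neg_of_mem_soSet_of_le hso (r := p + 1 - l) (c := p + 1 - i) (by omega)
      (by omega) (by omega) (by omega)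
    have e₂ := hAB' l i hl h hi'
    have e₃ := ent_eq_of_mem_soSet hso (r := p + 1 - i) (c := p + l) (by omega) (by omega)
      (by omega) (by omega)
    have e₄ := hDB l i hl h hi'
    linarith

lemma apply_add_apply_mirror_eq_zero (hqp : q ≤ p) (hX : X ∈ nSet p q) {c d : Fin (p + q)}
    (hc : p - q ≤ c) (hc' : c < p) (hd : (d : ℕ) < p - q) :
    X c d + X (mirror p q c) d = 0 := by
  have e₁ := ent_eq_neg_of_mem_soSet_of_le hX.1 (r := c + 1) (c := d + 1) (by omega) (by omega)
    (by omega) (by omega)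
  have e₂ := hX.2.2.2.1 (d + 1) (p - c) (by omega) (by omega) (by omega) (by omega)
  have e₃ := ent_eq_of_mem_soSet hX.1 (r := d + 1) (c := p + (p - c)) (by omega) (by omega)
    (by omega) (by omega)
  have hm : p + (p - c) = mirror p q c + 1 := by rw [val_mirror hc]; omega
  rw [show p - (p - c) + 1 = c + 1 by omega] at e₂
  rw [hm] at e₂ e₃
  simp only [ent_eq_apply X _ _ rfl rfl] at e₁ e₂ e₃
  linarith

lemma apply_add_apply_mirror_symm (hqp : q ≤ p) (hX : X ∈ nSet p q) {c : Fin (p + q)}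
    (hc : p - q ≤ c) (hc' : c < p) (d : Fin (p + q)) :
    X c (mirror p q d) + X (mirror p q c) (mirror p q d) = X c d + X (mirror p q c) d := by
  refine apply_mirror_of_lower_half hqp (v := fun d => X c d + X (mirror p q c) d)
    (fun d hd hd' => ?_) d
  have e := ent_add_ent_eq_of_mem_nSet hqp hX (l := p - c) (i := p - d) (by omega) (by omega)
    (by omega) (by omega)
  rw [ent_eq_apply X c d (by omega) (by omega),
    ent_eq_apply X (mirror p q c) d (by rw [val_mirror hc]; omega) (by omega),
    ent_eq_apply X c (mirror p q d) (by omega) (by rw [val_mirror hd]; omega),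
    ent_eq_apply X (mirror p q c) (mirror p q d) (by rw [val_mirror hc]; omega)
      (by rw [val_mirror hd]; omega)] at e
  exact e.symm

variable {x : Fin (p + q) → ℝ}

lemma mulVec_apply_of_lt (hqp : q ≤ p) (hX : X ∈ nSet p q)
    (hx : ∀ i, 1 ≤ i → i ≤ q → vent x (p - i + 1) + vent x (p + i) = 0)
    {r : Fin (p + q)} (hr : (r : ℕ) < p - q) : (X *ᵥ x) r = 0 := by
  refine sum_mul_eq_zero_of_mirror hqp (fun c hc => ?_) (apply_mirror_of_mem_nSet hqp hX hr)
    (apply_mirror_eq_neg_of_vent hqp hx)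
  have e := hX.2.1 (r + 1) (c + 1) (by omega) (by omega) (by omega) (by omega)
  rwa [ent_eq_apply X r c rfl rfl] at e

lemma mulVec_apply_mirror (hqp : q ≤ p) (hX : X ∈ nSet p q)
    (hx : ∀ i, 1 ≤ i → i ≤ q → vent x (p - i + 1) + vent x (p + i) = 0)
    {c : Fin (p + q)} (hc : p - q ≤ c) : (X *ᵥ x) (mirror p q c) = - (X *ᵥ x) c := by
  refine rel_mirror_of_lower_half hqp (R := fun a b => (X *ᵥ x) a = - (X *ᵥ x) b)
    (fun a b h => by linarith) (fun c hc hc' => ?_) c hc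
  have h := sum_mul_eq_zero_of_mirror hqp (v := fun d => X c d + X (mirror p q c) d)
    (fun d hd => apply_add_apply_mirror_eq_zero hqp hX hc hc' hd)
    (apply_add_apply_mirror_symm hqp hX hc hc') (apply_mirror_eq_neg_of_vent hqp hx)
  simp only [add_mul, Finset.sum_add_distrib] at h
  simp only [mulVec, dotProduct]
  linarith

lemma mulVec_eq_zero_iff (hqp : q ≤ p) (hX : X ∈ nSet p q)
    (hx : ∀ i, 1 ≤ i → i ≤ q → vent x (p - i + 1) + vent x (p + i) = 0) :
    X *ᵥ x = 0 ↔ ∀ l : Fin q, (X *ᵥ x) (Fin.natAdd p l) = 0 := by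
  refine ⟨fun h l => by rw [h, Pi.zero_apply], fun h => funext fun c => ?_⟩
  by_cases hc : (c : ℕ) < p - q
  · exact mulVec_apply_of_lt hqp hX hx hc
  by_cases hcp : (c : ℕ) < p
  · have e := mulVec_apply_mirror hqp hX hx (c := c) (by omega)
    have hm : mirror p q c = Fin.natAdd p ⟨p - 1 - c, by omega⟩ := by
      ext
      rw [val_mirror (by omega)]
      simp only [Fin.val_natAdd]
      omega
    rw [hm, h] at e
    rw [Pi.zero_apply]
    linarith
  · rw [Pi.zero_apply, ← h ⟨c - p, by omega⟩]
    congr 1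
    ext
    simp only [Fin.val_natAdd]
    omega

end rows

lemma param_eq_zero_of_support {f : Fin q → Fin (p - 1) → ℝ}
    (hf : ∀ l (m : Fin (p - 1)), p - q ≤ (m : ℕ) → f l m = 0) {r c : ℕ} (h : p - q < r ∨ p < c) :
    param f r c = 0 := by
  unfold param
  split_ifs with h₁ h₂
  · exact hf _ _ (by simp only; omega)
  · exact hf _ _ (by simp only; omega)
  · rfl

lemma ofParams_natAdd_apply (hqp : q ≤ p) {f : Fin q → Fin (p - 1) → ℝ}
    (hf : ∀ l (m : Fin (p - 1)), p - q ≤ (m : ℕ) → f l m = 0) (l : Fin q) (c : Fin (p + q)) :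
    ofParams p q f (Fin.natAdd p l) c =
      if h : (c : ℕ) < p - q then f l ⟨c, by have := l.isLt; omega⟩ else 0 := by
  change entry f (p + l + 1) (c + 1) = _
  by_cases hcp : (c : ℕ) + 1 ≤ p
  · rw [entry_of_gt_of_le f (by omega) hcp, param_eq_zero_of_support hf (by omega), zero_add]
    split_ifs with hc
    · rw [param_of_lt f (by omega)]
      congr 2; omega
    · exact param_eq_zero_of_support hf (by omega)
  · rw [entry_of_gt_of_gt f (by omega) (by omega), param_eq_zero_of_support hf (by omega),
      param_eq_zero_of_support hf (by omega), sub_zero, dif_neg (by omega)]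

def mulVecLast (x : Fin (p + q) → ℝ) : nSub p q →ₗ[ℝ] (Fin q → ℝ) where
  toFun X l := (X.1 *ᵥ x) (Fin.natAdd p l)
  map_add' X Y := by ext; simp [add_mulVec]
  map_smul' a X := by ext; simp [smul_mulVec]

lemma ker_mulVecLast (hqp : q ≤ p) {x : Fin (p + q) → ℝ}
    (hx : ∀ i, 1 ≤ i → i ≤ q → vent x (p - i + 1) + vent x (p + i) = 0) :
    LinearMap.ker (mulVecLast x) = (nSub p q ⊓ kerAt x).comap (nSub p q).subtype := by
  ext X
  simp only [LinearMap.mem_ker, Submodule.mem_comap, Submodule.subtype_apply, Submodule.mem_inf,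
    SetLike.coe_mem, true_and]
  change _ ↔ X.1 *ᵥ x = 0
  rw [mulVec_eq_zero_iff hqp X.2 hx, funext_iff]
  rfl

lemma mulVecLast_surjective (hqp : q ≤ p) {x : Fin (p + q) → ℝ} {j : Fin (p + q)}
    (hj : (j : ℕ) < p - q) (hxj : x j ≠ 0) : Function.Surjective (mulVecLast x) := by
  intro t
  let f : Fin q → Fin (p - 1) → ℝ := fun l m => if (m : ℕ) = j then t l / x j else 0
  have hf : ∀ l (m : Fin (p - 1)), p - q ≤ (m : ℕ) → f l m = 0 := fun l m hm => if_neg (by omega)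
  refine ⟨⟨ofParams p q f, ofParams_mem_nSet hqp f⟩, funext fun l => ?_⟩
  change ∑ c, ofParams p q f (Fin.natAdd p l) c * x c = t l
  rw [Finset.sum_eq_single j, ofParams_natAdd_apply hqp hf, dif_pos hj]
  · simp only [f, if_pos, div_mul_cancel₀ _ hxj]
  · intro c _ hc
    rw [ofParams_natAdd_apply hqp hf]
    split_ifs
    · simp only [f, if_neg (fun h => hc (Fin.ext h)), zero_mul]
    · rw [zero_mul]
  · simp

end IwasawaNilradical

open IwasawaNilradical

theorem nSub_stabilizer_dim_case2_general (p q : ℕ)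
    (x : Fin (p + q) → ℝ)
    (hzero : ∀ i, 1 ≤ i → i ≤ q → vent x (p - i + 1) + vent x (p + i) = 0)
    (hne : ∃ j, 1 ≤ j ∧ j ≤ p - q ∧ vent x j ≠ 0) :
    Module.finrank ℝ ↥(nSub p q ⊓ kerAt x) = q * (p - 2) ∧
    Module.finrank ℝ ↥(nSub p q) - Module.finrank ℝ ↥(nSub p q ⊓ kerAt x) = q := by
  obtain ⟨j, hj, hjq, hxj⟩ := hne
  have hqp : q ≤ p := by omega
  rw [vent_eq_apply x ⟨j - 1, by omega⟩ (by simp only; omega)] at hxj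
  have hker : Module.finrank ℝ ↥(nSub p q ⊓ kerAt x) =
      Module.finrank ℝ (LinearMap.ker (mulVecLast x)) := by
    rw [ker_mulVecLast hqp hzero]
    exact (Submodule.comapSubtypeEquivOfLe inf_le_left).finrank_eq.symm
  have hrank := (mulVecLast x).finrank_range_add_finrank_ker
  rw [LinearMap.range_eq_top.mpr (mulVecLast_surjective hqp (by simp only; omega) hxj),
    finrank_top, Module.finrank_fin_fun, finrank_nSub hqp, ← hker] at hrank
  have hsplit : q * (p - 1) = q * (p - 2) + q := by
    rcases Nat.eq_zero_or_pos q with rfl | hq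
    · simp
    · rw [show p - 1 = p - 2 + 1 by omega, Nat.mul_add_one]
  rw [finrank_nSub hqp]
  constructor <;> omega

/-- Assume `p > q`. If `x^{p-i+1} + x^{p+i} = 0` for all `1 ≤ i ≤ q` and
`x^j ≠ 0` for some `1 ≤ j ≤ p-q`, then `dim 𝔫_x = q(p-2)`; equivalently
`dim 𝔫 - dim 𝔫_x = q`. -/
theorem nSub_stabilizer_dim_case2 (p q : ℕ) (hq : 1 ≤ q) (hpq : q < p)
    (x : Fin (p + q) → ℝ)
    (hzero : ∀ i, 1 ≤ i → i ≤ q → vent x (p - i + 1) + vent x (p + i) = 0)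
    (hne : ∃ j, 1 ≤ j ∧ j ≤ p - q ∧ vent x j ≠ 0) :
    Module.finrank ℝ ↥(nSub p q ⊓ kerAt x) = q * (p - 2) ∧
    Module.finrank ℝ ↥(nSub p q) - Module.finrank ℝ ↥(nSub p q ⊓ kerAt x) = q :=
  nSub_stabilizer_dim_case2_general p q x hzero hne
end

section
/- Let 𝔭 := {X ∈ 𝔰𝔬(p,q) : Xᵀ = X}. Then 𝔞 ⊆ 𝔭, any two elements of 𝔞 commute (XY = YX for all X, Y ∈ 𝔞), and 𝔞 is a maximal abelian subspace of 𝔭: every Y ∈ 𝔭 satisfying XY = YX for all X ∈ 𝔞 belongs to 𝔞. -/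
open Matrix

/-! In 0-based indices, the positions `(p-l+1, p+l)`, `(p+l, p-l+1)` defining `𝔞` form the
anti-diagonal `i + j + 1 = 2p`, so `𝔞` consists of the symmetric matrices supported on it.
This anti-diagonal lies in the off-diagonal blocks, whence `𝔞 ⊆ 𝔭`; the product of two matrices
supported on it is diagonal, hence symmetric, so two symmetric ones commute. Conversely a
symmetric element `Y` of `𝔰𝔬(p,q)` has vanishing diagonal blocks, and an entry `Y a b` with
`a < p ≤ b` off the anti-diagonal is read off from the commutator of `Y` with
`E_{ub} + E_{bu} ∈ 𝔞`, where `u + b + 1 = 2p`. -/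

lemma ent_succ {n : ℕ} (X : Matrix (Fin n) (Fin n) ℝ) (i j : Fin n) :
    ent X (i + 1) (j + 1) = X i j := by
  simp [ent]

lemma Matrix.IsSymm.ent_comm {n : ℕ} {X : Matrix (Fin n) (Fin n) ℝ} (hX : X.IsSymm) (i j : ℕ) :
    ent X i j = ent X j i := by
  unfold ent
  by_cases h : i - 1 < n ∧ j - 1 < n
  · rw [dif_pos h, dif_pos h.symm, hX.apply]
  · rw [dif_neg h, dif_neg (mt And.symm h)]

namespace Matrix

variable {R : Type*} {N : ℕ}

def SupportedOnAntidiag [Zero R] (p : ℕ) (X : Matrix (Fin N) (Fin N) R) : Prop :=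
  ∀ i j : Fin N, (i : ℕ) + j + 1 ≠ 2 * p → X i j = 0

variable {p : ℕ}

lemma SupportedOnAntidiag.mul_apply_of_ne [NonUnitalNonAssocSemiring R]
    {X Y : Matrix (Fin N) (Fin N) R} (hX : SupportedOnAntidiag p X)
    (hY : SupportedOnAntidiag p Y) {a b : Fin N} (hab : a ≠ b) : (X * Y) a b = 0 := by
  have hab' : (a : ℕ) ≠ b := Fin.val_ne_of_ne hab
  refine (mul_apply ..).trans (Finset.sum_eq_zero fun k _ => ?_)
  by_cases hak : (a : ℕ) + k + 1 = 2 * p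
  · rw [hY k b (by omega), mul_zero]
  · rw [hX a k hak, zero_mul]

lemma SupportedOnAntidiag.commute [CommSemiring R] {X Y : Matrix (Fin N) (Fin N) R}
    (hX : SupportedOnAntidiag p X) (hY : SupportedOnAntidiag p Y) (hXs : X.IsSymm)
    (hYs : Y.IsSymm) : Commute X Y := by
  ext a b
  obtain rfl | hab := eq_or_ne a b
  · calc (X * Y) a a = (X * Y)ᵀ a a := rfl
      _ = (Y * X) a a := by rw [transpose_mul, hXs.eq, hYs.eq]
  · rw [hX.mul_apply_of_ne hY hab, hY.mul_apply_of_ne hX hab]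

lemma apply_eq_zero_of_commute_single_add_single {n : Type*} [Fintype n] [DecidableEq n]
    [Semiring R] {Y : Matrix n n R} {a b u : n}
    (hY : Commute (single u b 1 + single b u 1) Y) (hau : a ≠ u) (hab : a ≠ b) (hub : u ≠ b) :
    Y a b = 0 := by
  have h := congrFun (congrFun hY.eq a) u
  simpa [add_mul, mul_add, hau, hab, hub] using h.symm

end Matrix

lemma mem_soSet_iff_of_isSymm {p q : ℕ} {X : Matrix (Fin (p + q)) (Fin (p + q)) ℝ}
    (hX : X.IsSymm) :
    X ∈ soSet p q ↔ ∀ a b : Fin (p + q), ((a : ℕ) < p ↔ (b : ℕ) < p) → X a b = 0 := by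
  have hentry : ∀ a b, (Xᵀ * Jmat p q + Jmat p q * X) a b =
      ((if (b : ℕ) < p then 1 else -1) + (if (a : ℕ) < p then 1 else -1)) * X a b := by
    intro a b
    simp only [Jmat, Matrix.add_apply, mul_diagonal, diagonal_mul, transpose_apply, hX.apply]
    split_ifs <;> ring
  simp only [soSet, Set.mem_ofPred_eq, ← Matrix.ext_iff, hentry, Matrix.zero_apply, mul_eq_zero]
  refine forall₂_congr fun a b => ?_
  split_ifs <;> norm_num <;> tauto

section aSet

variable {p q : ℕ}

lemma mem_aSet_iff (hpq : q ≤ p) {X : Matrix (Fin (p + q)) (Fin (p + q)) ℝ} :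
    X ∈ aSet p q ↔ X.IsSymm ∧ SupportedOnAntidiag p X := by
  constructor
  · rintro ⟨hpair, hoff⟩
    have hsupp : SupportedOnAntidiag p X := by
      intro a b hab
      have h := hoff (a + 1) (b + 1) (by omega) (by omega) (by omega) (by omega)
        (by rintro ⟨l, _, _, ⟨_, _⟩ | ⟨_, _⟩⟩ <;> omega)
      rwa [ent_succ] at h
    have hmixed : ∀ a b : Fin (p + q), (a : ℕ) < p → (a : ℕ) + b + 1 = 2 * p → X a b = X b a := by
      intro a b ha hab
      have h := hpair ((b : ℕ) + 1 - p) (by omega) (by omega)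
      rwa [show p - ((b : ℕ) + 1 - p) + 1 = a + 1 by omega,
        show p + ((b : ℕ) + 1 - p) = b + 1 by omega, ent_succ, ent_succ] at h
    refine ⟨IsSymm.ext fun a b => ?_, hsupp⟩
    by_cases hab : (a : ℕ) + b + 1 = 2 * p
    · rcases lt_or_ge (a : ℕ) p with ha | ha
      · exact (hmixed a b ha hab).symm
      · exact hmixed b a (by omega) (by omega)
    · rw [hsupp a b hab, hsupp b a (by omega)]
  · rintro ⟨hsymm, hsupp⟩
    refine ⟨fun l _ _ => hsymm.ent_comm _ _, fun i j hi hi' hj hj' hne => ?_⟩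
    obtain ⟨a, rfl⟩ : ∃ a : Fin (p + q), (a : ℕ) + 1 = i :=
      ⟨⟨i - 1, by omega⟩, Nat.sub_add_cancel hi⟩
    obtain ⟨b, rfl⟩ : ∃ b : Fin (p + q), (b : ℕ) + 1 = j :=
      ⟨⟨j - 1, by omega⟩, Nat.sub_add_cancel hj⟩
    rw [ent_succ]
    refine hsupp a b fun hab => hne ?_
    rcases lt_or_ge (b : ℕ) p with hb | hb
    · exact ⟨(a : ℕ) + 1 - p, by omega, by omega, Or.inr ⟨by omega, by omega⟩⟩
    · exact ⟨(b : ℕ) + 1 - p, by omega, by omega, Or.inl ⟨by omega, by omega⟩⟩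

lemma aSet_subset_pSet (hpq : q ≤ p) : aSet p q ⊆ pSet p q := by
  intro X hX
  obtain ⟨hsymm, hsupp⟩ := (mem_aSet_iff hpq).1 hX
  exact ⟨(mem_soSet_iff_of_isSymm hsymm).2 fun a b hab => hsupp a b (by omega), hsymm⟩

lemma single_add_single_mem_aSet (hpq : q ≤ p) {u b : Fin (p + q)}
    (hub : (u : ℕ) + b + 1 = 2 * p) : single u b 1 + single b u 1 ∈ aSet p q := by
  refine (mem_aSet_iff hpq).2 ⟨?_, fun i j hij => ?_⟩
  · simp [IsSymm, add_comm]
  · rw [Matrix.add_apply, single_apply_of_ne, single_apply_of_ne, add_zero] <;>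
      rintro ⟨rfl, rfl⟩ <;> omega

lemma supportedOnAntidiag_of_commute (hpq : q ≤ p) {Y : Matrix (Fin (p + q)) (Fin (p + q)) ℝ}
    (hY : Y ∈ pSet p q) (hcomm : ∀ X ∈ aSet p q, Commute X Y) : SupportedOnAntidiag p Y := by
  have hsymm : Y.IsSymm := hY.2
  have hblock := (mem_soSet_iff_of_isSymm hsymm).1 hY.1
  have hmixed : ∀ a b : Fin (p + q), (a : ℕ) < p → p ≤ (b : ℕ) → (a : ℕ) + b + 1 ≠ 2 * p →
      Y a b = 0 := by
    intro a b ha hb hab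
    let u : Fin (p + q) := ⟨2 * p - 1 - b, by omega⟩
    have hu : (u : ℕ) = 2 * p - 1 - b := rfl
    exact apply_eq_zero_of_commute_single_add_single
      (hcomm _ (single_add_single_mem_aSet hpq (u := u) (b := b) (by omega)))
      (Fin.ne_of_val_ne (by omega)) (Fin.ne_of_val_ne (by omega)) (Fin.ne_of_val_ne (by omega))
  intro a b hab
  rcases lt_or_ge (a : ℕ) p with ha | ha <;> rcases lt_or_ge (b : ℕ) p with hb | hb
  · exact hblock a b (iff_of_true ha hb)
  · exact hmixed a b ha hb hab
  · rw [← hsymm.apply]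
    exact hmixed b a hb ha (by omega)
  · exact hblock a b (iff_of_false (by omega) (by omega))

end aSet

theorem aSet_maximal_abelian_general (p q : ℕ) (hpq : q ≤ p) :
    aSet p q ⊆ pSet p q ∧
    (∀ X ∈ aSet p q, ∀ Y ∈ aSet p q, X * Y = Y * X) ∧
    (∀ Y ∈ pSet p q, (∀ X ∈ aSet p q, X * Y = Y * X) → Y ∈ aSet p q) := by
  refine ⟨aSet_subset_pSet hpq, fun X hX Y hY => ?_, fun Y hY hcomm => ?_⟩
  · obtain ⟨hXs, hXa⟩ := (mem_aSet_iff hpq).1 hX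
    obtain ⟨hYs, hYa⟩ := (mem_aSet_iff hpq).1 hY
    exact hXa.commute hYa hXs hYs
  · exact (mem_aSet_iff hpq).2 ⟨hY.2, supportedOnAntidiag_of_commute hpq hY hcomm⟩

/-- With `𝔭 := {X ∈ 𝔰𝔬(p,q) : Xᵀ = X}`, one has `𝔞 ⊆ 𝔭`, any two elements
of `𝔞` commute, and `𝔞` is a maximal abelian subspace of `𝔭`: every `Y ∈ 𝔭` commuting with
all of `𝔞` belongs to `𝔞`. -/
theorem aSet_maximal_abelian (p q : ℕ) (hq : 1 ≤ q) (hpq : q ≤ p) :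
    aSet p q ⊆ pSet p q ∧
    (∀ X ∈ aSet p q, ∀ Y ∈ aSet p q, X * Y = Y * X) ∧
    (∀ Y ∈ pSet p q, (∀ X ∈ aSet p q, X * Y = Y * X) → Y ∈ aSet p q) :=
  aSet_maximal_abelian_general p q hpq
end

section
/- For every 1 ≤ j ≤ q, the N-orbit of w_j is N(w_j) = { s_1 w_1 + ⋯ + s_{j−1} w_{j−1} + w_j : s_1, …, s_{j−1} ∈ ℝ }; in particular N(w_1) = {w_1}. -/
open Matrix

/-!
Every `X ∈ 𝔫` maps `w_k` into `span (w_1, …, w_{k-1})`, so it lowers the flag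
`W_k = span (w_1, …, w_k)`, `k ≤ q`. Hence `exp X`, and with it every element of `N`, moves each
vector of `W_k` by an element of `W_{k-1}`; this gives `N(w_j) ⊆ w_j + W_{j-1}`. Conversely,
`X = ∑_{i<j} (s_i / 2) (w_i w_jᵀ - v_j v_iᵀ)` lies in `𝔫`, squares to zero (the `w`'s and
`v`'s are orthogonal for the Euclidean dot product, with `w_i ⬝ w_i = v_i ⬝ v_i = 2`) and sends
`w_j` to `∑_{i<j} s_i w_i`, so `exp X · w_j = w_j + ∑_{i<j} s_i w_i`.
-/

section Flag

variable {n : ℕ} (W : ℕ → Submodule ℝ (Fin n → ℝ))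

def flagUnipotent (hW : Monotone W) (m : ℕ) : Submonoid (Matrix (Fin n) (Fin n) ℝ) where
  carrier := {M | ∀ k < m, ∀ v ∈ W (k + 1), M *ᵥ v - v ∈ W k}
  one_mem' k _ v _ := by simp
  mul_mem' {M N} hM hN k hk v hv := by
    have hNv : N *ᵥ v ∈ W (k + 1) := by
      simpa using add_mem (hW k.le_succ (hN k hk v hv)) hv
    rw [← mulVec_mulVec,
      show M *ᵥ N *ᵥ v - v = (M *ᵥ N *ᵥ v - N *ᵥ v) + (N *ᵥ v - v) by abel]
    exact add_mem (hM k hk _ hNv) (hN k hk v hv)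

lemma hasSum_exp_mulVec (X : Matrix (Fin n) (Fin n) ℝ) (v : Fin n → ℝ) :
    HasSum (fun i => (i.factorial⁻¹ : ℝ) • (X ^ i *ᵥ v)) (NormedSpace.exp X *ᵥ v) := by
  -- this norm induces the product topology, so `exp` is the same for it (the final `rfl`)
  let _ : NormedRing (Matrix (Fin n) (Fin n) ℝ) := Matrix.linftyOpNormedRing
  let _ : NormedAlgebra ℝ (Matrix (Fin n) (Fin n) ℝ) := Matrix.linftyOpNormedAlgebra
  convert (NormedSpace.exp_series_hasSum_exp' (𝕂 := ℝ) X).map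
    (mulVec.addMonoidHomLeft v) (continuous_id.matrix_mulVec continuous_const) using 1
  · funext i
    exact (smul_mulVec _ _ _).symm
  · rfl

variable {W}

lemma exp_mem_flagUnipotent (hW : Monotone W) {m : ℕ} {X : Matrix (Fin n) (Fin n) ℝ}
    (hX : ∀ k < m, ∀ v ∈ W (k + 1), X *ᵥ v ∈ W k) :
    NormedSpace.exp X ∈ flagUnipotent W hW m := by
  intro k hk v hv
  have hpow : ∀ i, X ^ i *ᵥ v ∈ W (k + 1) := by
    intro i
    induction i with
    | zero => simpa using hv
    | succ i ih => rw [pow_succ', ← mulVec_mulVec]; exact hW k.le_succ (hX k hk _ ih)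
  have hsum := (hasSum_nat_add_iff' 1).2 (hasSum_exp_mulVec X v)
  simp only [Finset.sum_range_one, Nat.factorial_zero, Nat.cast_one, inv_one, pow_zero,
    one_mulVec, one_smul] at hsum
  rw [← hsum.tsum_eq]
  -- every term of the series for `exp X v - v` lies in the closed subspace `W k`
  refine tsum_mem (W k).closed_of_finiteDimensional fun i => (W k).smul_mem _ ?_
  rw [pow_succ', ← mulVec_mulVec]
  exact hX k hk _ (hpow i)

end Flag

lemma exp_eq_one_add_of_mul_self_eq_zero {𝔸 : Type*} [Ring 𝔸] [Algebra ℚ 𝔸]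
    [TopologicalSpace 𝔸] [IsTopologicalRing 𝔸] {x : 𝔸} (hx : x * x = 0) :
    NormedSpace.exp x = 1 + x := by
  have hpow : ∀ i, x ^ (i + 2) = 0 := fun i => by rw [pow_add, sq, hx, mul_zero]
  rw [NormedSpace.exp_eq_tsum ℚ]
  beta_reduce
  rw [tsum_eq_sum (s := Finset.range 2) fun i hi => by
    obtain ⟨i, rfl⟩ := Nat.exists_eq_add_of_le (by simp at hi; omega : 2 ≤ i)
    rw [add_comm, hpow, smul_zero]]
  simp [Finset.sum_range_succ]

section Coordinates

lemma vent_eq_apply_s9 {n a : ℕ} (x : Fin n → ℝ) (h1 : 1 ≤ a) (h2 : a ≤ n) :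
    vent x a = x ⟨a - 1, by omega⟩ := dif_pos (by omega)

lemma vent_add {n : ℕ} (x y : Fin n → ℝ) (a : ℕ) :
    vent (x + y) a = vent x a + vent y a := by
  unfold vent; split <;> simp

lemma vent_sub {n : ℕ} (x y : Fin n → ℝ) (a : ℕ) :
    vent (x - y) a = vent x a - vent y a := by
  unfold vent; split <;> simp

lemma vent_sum_smul {n : ℕ} (s : Finset ℕ) (c : ℕ → ℝ) (x : ℕ → Fin n → ℝ) (a : ℕ) :
    vent (∑ m ∈ s, c m • x m) a = ∑ m ∈ s, c m * vent (x m) a := by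
  unfold vent; split <;> simp [Finset.sum_apply]

lemma ent_sub {n : ℕ} (X Y : Matrix (Fin n) (Fin n) ℝ) (a b : ℕ) :
    ent (X - Y) a b = ent X a b - ent Y a b := by
  unfold ent; split <;> simp

lemma ent_vecMulVec {n : ℕ} (x y : Fin n → ℝ) (a b : ℕ) :
    ent (vecMulVec x y) a b = vent x a * vent y b := by
  unfold ent vent; split_ifs <;> simp_all [vecMulVec_apply]

lemma ext_vent {n : ℕ} {x y : Fin n → ℝ}
    (h : ∀ a, 1 ≤ a → a ≤ n → vent x a = vent y a) : x = y := by
  funext r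
  simpa [vent_eq_apply_s9] using h (r + 1) (by omega) (by omega)

lemma stdE_eq_single {n a : ℕ} (h1 : 1 ≤ a) (h2 : a ≤ n) :
    stdE n a = Pi.single ⟨a - 1, by omega⟩ 1 := by
  funext r
  simp only [stdE, Pi.single_apply, Fin.ext_iff]
  congr 1
  grind

lemma dotProduct_stdE {n a : ℕ} (x : Fin n → ℝ) (h1 : 1 ≤ a) (h2 : a ≤ n) :
    x ⬝ᵥ stdE n a = vent x a := by
  rw [stdE_eq_single h1 h2, dotProduct_single_one, vent_eq_apply_s9 x h1 h2]

lemma vent_mulVec_stdE {n a b : ℕ} (X : Matrix (Fin n) (Fin n) ℝ) (h1 : 1 ≤ b)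
    (h2 : b ≤ n) :
    vent (X *ᵥ stdE n b) a = ent X a b := by
  unfold vent ent
  by_cases ha : a - 1 < n
  · rw [dif_pos ha, dif_pos ⟨ha, by omega⟩]
    exact (dotProduct_stdE _ h1 h2).trans (vent_eq_apply_s9 _ h1 h2)
  · rw [dif_neg ha, dif_neg (by omega)]

lemma vent_stdE {n a : ℕ} (b : ℕ) (h1 : 1 ≤ a) (h2 : a ≤ n) :
    vent (stdE n b) a = if a = b then 1 else 0 := by
  rw [vent_eq_apply_s9 _ h1 h2, stdE]
  grind

variable {p q : ℕ}

lemma vent_wVec_of_le {a i : ℕ} (ha : 1 ≤ a) (hap : a ≤ p - q) (hi : 1 ≤ i)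
    (hiq : i ≤ q) :
    vent (wVec p q i) a = 0 := by
  rw [wVec, vent_sub, vent_stdE _ ha (by omega), vent_stdE _ ha (by omega)]
  split_ifs <;> first | omega | simp

lemma vent_vVec_of_le {a i : ℕ} (ha : 1 ≤ a) (hap : a ≤ p - q) (hi : 1 ≤ i)
    (hiq : i ≤ q) :
    vent (vVec p q i) a = 0 := by
  rw [vVec, vent_add, vent_stdE _ ha (by omega), vent_stdE _ ha (by omega)]
  split_ifs <;> first | omega | simp

lemma vent_wVec_lower {m i : ℕ} (hpq : q ≤ p) (hm : 1 ≤ m) (hmq : m ≤ q) (hi : 1 ≤ i)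
    (hiq : i ≤ q) :
    vent (wVec p q i) (p - m + 1) = if m = i then 1 else 0 := by
  rw [wVec, vent_sub, vent_stdE _ (by omega) (by omega), vent_stdE _ (by omega) (by omega)]
  split_ifs <;> first | omega | simp

lemma vent_vVec_lower {m i : ℕ} (hpq : q ≤ p) (hm : 1 ≤ m) (hmq : m ≤ q) (hi : 1 ≤ i)
    (hiq : i ≤ q) :
    vent (vVec p q i) (p - m + 1) = if m = i then 1 else 0 := by
  rw [vVec, vent_add, vent_stdE _ (by omega) (by omega), vent_stdE _ (by omega) (by omega)]
  split_ifs <;> first | omega | simp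

lemma vent_wVec_upper {m i : ℕ} (hpq : q ≤ p) (hm : 1 ≤ m) (hmq : m ≤ q) (hi : 1 ≤ i)
    (hiq : i ≤ q) :
    vent (wVec p q i) (p + m) = if m = i then -1 else 0 := by
  rw [wVec, vent_sub, vent_stdE _ (by omega) (by omega), vent_stdE _ (by omega) (by omega)]
  split_ifs <;> first | omega | simp

lemma vent_vVec_upper {m i : ℕ} (hpq : q ≤ p) (hm : 1 ≤ m) (hmq : m ≤ q) (hi : 1 ≤ i)
    (hiq : i ≤ q) :
    vent (vVec p q i) (p + m) = if m = i then 1 else 0 := by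
  rw [vVec, vent_add, vent_stdE _ (by omega) (by omega), vent_stdE _ (by omega) (by omega)]
  split_ifs <;> first | omega | simp

end Coordinates

def wFlag (p q k : ℕ) : Submodule ℝ (Fin (p + q) → ℝ) :=
  Submodule.span ℝ (wVec p q '' ↑(Finset.Icc 1 k))

section WFlag

variable {p q : ℕ}

lemma mem_wFlag_iff {k : ℕ} {x : Fin (p + q) → ℝ} :
    x ∈ wFlag p q k ↔ ∃ c : ℕ → ℝ, ∑ i ∈ Finset.Icc 1 k, c i • wVec p q i = x :=
  Submodule.mem_span_image_finset_iff_exists_fun' ℝ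

lemma wFlag_mono : Monotone (wFlag p q) := fun _ _ h =>
  Submodule.span_mono (Set.image_mono (Finset.coe_subset.2 (Finset.Icc_subset_Icc_right h)))

lemma wVec_mem_wFlag {i k : ℕ} (hi : 1 ≤ i) (hik : i ≤ k) : wVec p q i ∈ wFlag p q k :=
  Submodule.subset_span ⟨i, by simp [hi, hik], rfl⟩

lemma mem_wFlag_of_vent (hpq : q ≤ p) {k : ℕ} (hk : k ≤ q) {x : Fin (p + q) → ℝ}
    (htop : ∀ a, 1 ≤ a → a ≤ p - q → vent x a = 0)
    (hpair : ∀ m, 1 ≤ m → m ≤ q → vent x (p + m) = -vent x (p - m + 1))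
    (hvanish : ∀ m, k < m → m ≤ q → vent x (p - m + 1) = 0) :
    x ∈ wFlag p q k := by
  refine mem_wFlag_iff.2 ⟨fun m => vent x (p - m + 1), ext_vent fun a ha1 ha2 => ?_⟩
  rw [vent_sum_smul]
  rcases le_or_gt a (p - q) with hat | hat
  · rw [htop a ha1 hat]
    refine Finset.sum_eq_zero fun m hm => ?_
    rw [Finset.mem_Icc] at hm
    rw [vent_wVec_of_le ha1 hat hm.1 (by omega), mul_zero]
  rcases le_or_gt a p with hap | hap
  · obtain ⟨m₀, rfl, hm₀, hm₀q⟩ : ∃ m₀, a = p - m₀ + 1 ∧ 1 ≤ m₀ ∧ m₀ ≤ q :=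
      ⟨p + 1 - a, by omega, by omega, by omega⟩
    rw [Finset.sum_congr rfl fun m hm => congrArg (_ * ·) (vent_wVec_lower hpq hm₀ hm₀q
      (Finset.mem_Icc.1 hm).1 ((Finset.mem_Icc.1 hm).2.trans hk))]
    simp only [mul_ite, mul_one, mul_zero, Finset.sum_ite_eq, Finset.mem_Icc]
    split_ifs
    · rfl
    · exact (hvanish m₀ (by omega) hm₀q).symm
  · obtain ⟨m₀, rfl, hm₀, hm₀q⟩ : ∃ m₀, a = p + m₀ ∧ 1 ≤ m₀ ∧ m₀ ≤ q :=
      ⟨a - p, by omega, by omega, by omega⟩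
    rw [Finset.sum_congr rfl fun m hm => congrArg (_ * ·) (vent_wVec_upper hpq hm₀ hm₀q
      (Finset.mem_Icc.1 hm).1 ((Finset.mem_Icc.1 hm).2.trans hk))]
    simp only [mul_ite, mul_neg, mul_one, mul_zero, Finset.sum_ite_eq, Finset.mem_Icc]
    rw [hpair m₀ hm₀ hm₀q]
    split_ifs
    · rfl
    · rw [hvanish m₀ (by omega) hm₀q, neg_zero]

end WFlag

section SoPQ

variable {p q : ℕ} {X : Matrix (Fin (p + q)) (Fin (p + q)) ℝ}

lemma ent_soSet (hX : X ∈ soSet p q) {a b : ℕ} (ha : 1 ≤ a) (hap : a ≤ p + q) (hb : 1 ≤ b)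
    (hbp : b ≤ p + q) :
    ent X b a * (if b ≤ p then 1 else -1) + (if a ≤ p then 1 else -1) * ent X a b = 0 := by
  have h := congrFun (congrFun hX ⟨a - 1, by omega⟩) ⟨b - 1, by omega⟩
  simp only [Jmat, mul_diagonal, diagonal_mul, transpose_apply, Matrix.add_apply,
    Matrix.zero_apply] at h
  rw [ent, ent, dif_pos ⟨by omega, by omega⟩, dif_pos ⟨by omega, by omega⟩]
  convert h using 3 <;> exact if_congr (by omega) rfl rfl

lemma ent_soSet_skew_lower (hX : X ∈ soSet p q) {a b : ℕ} (ha : 1 ≤ a) (hap : a ≤ p)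
    (hb : 1 ≤ b) (hbp : b ≤ p) : ent X a b = -ent X b a := by
  have h := ent_soSet hX ha (by omega) hb (by omega)
  rw [if_pos hap, if_pos hbp] at h
  linarith

lemma ent_soSet_skew_upper (hX : X ∈ soSet p q) {a b : ℕ} (hpa : p < a) (haq : a ≤ p + q)
    (hpb : p < b) (hbq : b ≤ p + q) : ent X a b = -ent X b a := by
  have h := ent_soSet hX (by omega) haq (by omega) hbq
  rw [if_neg (by omega), if_neg (by omega)] at h
  linarith

lemma ent_soSet_symm (hX : X ∈ soSet p q) {a b : ℕ} (ha : 1 ≤ a) (hap : a ≤ p)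
    (hpb : p < b) (hbq : b ≤ p + q) : ent X b a = ent X a b := by
  have h := ent_soSet hX ha (by omega) (by omega) hbq
  rw [if_pos hap, if_neg (by omega)] at h
  linarith

end SoPQ

section NilpotentFactor

variable {p q : ℕ}

lemma vent_mulVec_wVec (X : Matrix (Fin (p + q)) (Fin (p + q)) ℝ) {k : ℕ}
    (hk : 1 ≤ k) (hkq : k ≤ q) (a : ℕ) :
    vent (X *ᵥ wVec p q k) a = ent X a (p - k + 1) - ent X a (p + k) := by
  rw [wVec, mulVec_sub, vent_sub, vent_mulVec_stdE _ (by omega) (by omega),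
    vent_mulVec_stdE _ (by omega) (by omega)]

lemma mulVec_wVec_mem_wFlag (hpq : q ≤ p) {X : Matrix (Fin (p + q)) (Fin (p + q)) ℝ}
    (hX : X ∈ nSet p q) {k : ℕ} (hk : 1 ≤ k) (hkq : k ≤ q) :
    X *ᵥ wVec p q k ∈ wFlag p q (k - 1) := by
  obtain ⟨hso, -, hB, hAB, hA, hD⟩ := hX
  have hdiag : ∀ m, 1 ≤ m → m ≤ q → ent X (p - m + 1) (p - m + 1) = 0 := fun m _ _ => by
    linarith [ent_soSet_skew_lower hso (a := p - m + 1) (b := p - m + 1) (by omega) (by omega)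
      (by omega) (by omega)]
  have hbelow : ∀ m, k ≤ m → m ≤ q →
      ent X (p - m + 1) (p - k + 1) = ent X (p - m + 1) (p + k) := fun m hkm hmq => by
    obtain rfl | hkm := hkm.eq_or_lt
    · rw [hdiag k hk hkq, hB k hk hkq]
    · simpa [show p + 1 - m = p - m + 1 by omega, show p + 1 - k = p - k + 1 by omega]
        using hA k m hk hkm hmq
  refine mem_wFlag_of_vent hpq (by omega) (fun a ha hap => ?_) (fun m hm hmq => ?_)
    (fun m hm hmq => ?_)
  · rw [vent_mulVec_wVec X hk hkq, hAB a k ha hap hk hkq, sub_self]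
  · have hsymm := ent_soSet_symm hso (a := p - k + 1) (b := p + m) (by omega) (by omega)
      (by omega) (by omega)
    have hskew := ent_soSet_skew_upper hso (a := p + m) (b := p + k) (by omega) (by omega)
      (by omega) (by omega)
    rw [vent_mulVec_wVec X hk hkq, vent_mulVec_wVec X hk hkq]
    rcases lt_trichotomy m k with hmk | rfl | hkm
    · have h4 := hA m k hm hmk hkq
      have h5 := hD m k hm hmk hkq
      rw [show p + 1 - m = p - m + 1 by omega, show p + 1 - k = p - k + 1 by omega] at h4
      rw [show p + 1 - m = p - m + 1 by omega] at h5
      have h6 := ent_soSet_skew_lower hso (a := p - m + 1) (b := p - k + 1) (by omega)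
        (by omega) (by omega) (by omega)
      linarith
    · linarith [hB m hm hmq, hdiag m hm hmq]
    · have h5 := hD k m hk hkm hmq
      rw [show p + 1 - k = p - k + 1 by omega] at h5
      linarith [hbelow m hkm.le hmq]
  · rw [vent_mulVec_wVec X hk hkq, hbelow m (by omega) hmq, sub_self]

lemma mulVec_mem_wFlag_of_mem_nSet (hpq : q ≤ p) {X : Matrix (Fin (p + q)) (Fin (p + q)) ℝ}
    (hX : X ∈ nSet p q) {k : ℕ} (hk : k < q) {v : Fin (p + q) → ℝ}
    (hv : v ∈ wFlag p q (k + 1)) : X *ᵥ v ∈ wFlag p q k := by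
  refine (Submodule.span_le (p := (wFlag p q k).comap X.mulVecLin)).2 ?_ hv
  rintro _ ⟨i, hi, rfl⟩
  rw [Finset.coe_Icc, Set.mem_Icc] at hi
  exact wFlag_mono (by omega) (mulVec_wVec_mem_wFlag hpq hX hi.1 (by omega))

end NilpotentFactor

section RootVectors

variable {p q : ℕ}

lemma wVec_dotProduct {i : ℕ} (hi : 1 ≤ i) (hiq : i ≤ q) (x : Fin (p + q) → ℝ) :
    wVec p q i ⬝ᵥ x = vent x (p - i + 1) - vent x (p + i) := by
  rw [wVec, sub_dotProduct, dotProduct_comm, dotProduct_stdE _ (by omega) (by omega),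
    dotProduct_comm, dotProduct_stdE _ (by omega) (by omega)]

lemma vVec_dotProduct {i : ℕ} (hi : 1 ≤ i) (hiq : i ≤ q) (x : Fin (p + q) → ℝ) :
    vVec p q i ⬝ᵥ x = vent x (p - i + 1) + vent x (p + i) := by
  rw [vVec, add_dotProduct, dotProduct_comm, dotProduct_stdE _ (by omega) (by omega),
    dotProduct_comm, dotProduct_stdE _ (by omega) (by omega)]

lemma wVec_dotProduct_wVec (hpq : q ≤ p) {a b : ℕ} (ha : 1 ≤ a) (haq : a ≤ q) (hb : 1 ≤ b)
    (hbq : b ≤ q) : wVec p q a ⬝ᵥ wVec p q b = if a = b then 2 else 0 := by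
  rw [wVec_dotProduct ha haq, vent_wVec_lower hpq ha haq hb hbq,
    vent_wVec_upper hpq ha haq hb hbq]
  split_ifs <;> norm_num

lemma vVec_dotProduct_vVec (hpq : q ≤ p) {a b : ℕ} (ha : 1 ≤ a) (haq : a ≤ q) (hb : 1 ≤ b)
    (hbq : b ≤ q) : vVec p q a ⬝ᵥ vVec p q b = if a = b then 2 else 0 := by
  rw [vVec_dotProduct ha haq, vent_vVec_lower hpq ha haq hb hbq,
    vent_vVec_upper hpq ha haq hb hbq]
  split_ifs <;> norm_num

lemma wVec_dotProduct_vVec (hpq : q ≤ p) {a b : ℕ} (ha : 1 ≤ a) (haq : a ≤ q) (hb : 1 ≤ b)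
    (hbq : b ≤ q) : wVec p q a ⬝ᵥ vVec p q b = 0 := by
  rw [wVec_dotProduct ha haq, vent_vVec_lower hpq ha haq hb hbq,
    vent_vVec_upper hpq ha haq hb hbq, sub_self]

lemma vVec_dotProduct_wVec (hpq : q ≤ p) {a b : ℕ} (ha : 1 ≤ a) (haq : a ≤ q) (hb : 1 ≤ b)
    (hbq : b ≤ q) : vVec p q a ⬝ᵥ wVec p q b = 0 := by
  rw [vVec_dotProduct ha haq, vent_wVec_lower hpq ha haq hb hbq,
    vent_wVec_upper hpq ha haq hb hbq]
  split_ifs <;> norm_num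

lemma Jmat_mulVec_wVec {i : ℕ} (hi : 1 ≤ i) (hip : i ≤ p) :
    Jmat p q *ᵥ wVec p q i = vVec p q i := by
  funext r
  simp only [Jmat, mulVec_diagonal, wVec, vVec, stdE, Pi.sub_apply, Pi.add_apply]
  split_ifs <;> first | omega | norm_num

lemma Jmat_mulVec_vVec {i : ℕ} (hi : 1 ≤ i) (hip : i ≤ p) :
    Jmat p q *ᵥ vVec p q i = wVec p q i := by
  funext r
  simp only [Jmat, mulVec_diagonal, wVec, vVec, stdE, Pi.sub_apply, Pi.add_apply]
  split_ifs <;> first | omega | norm_num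

lemma vecMul_Jmat (x : Fin (p + q) → ℝ) : x ᵥ* Jmat p q = Jmat p q *ᵥ x := by
  funext r
  simp [Jmat, mulVec_diagonal, vecMul_diagonal, mul_comm]

def nRoot (p q i j : ℕ) : Matrix (Fin (p + q)) (Fin (p + q)) ℝ :=
  vecMulVec (wVec p q i) (wVec p q j) - vecMulVec (vVec p q j) (vVec p q i)

lemma nRoot_mem_soSet {i j : ℕ} (hi : 1 ≤ i) (hip : i ≤ p) (hj : 1 ≤ j) (hjp : j ≤ p) :
    nRoot p q i j ∈ soSet p q := by
  show (nRoot p q i j)ᵀ * Jmat p q + Jmat p q * nRoot p q i j = 0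
  rw [nRoot, transpose_sub, transpose_vecMulVec, transpose_vecMulVec, sub_mul, mul_sub,
    vecMulVec_mul, vecMulVec_mul, mul_vecMulVec, mul_vecMulVec, vecMul_Jmat, vecMul_Jmat,
    Jmat_mulVec_wVec hi hip, Jmat_mulVec_vVec hj hjp]
  abel

lemma nRoot_mem_nSet (hpq : q ≤ p) {i j : ℕ} (hi : 1 ≤ i) (hij : i < j) (hjq : j ≤ q) :
    nRoot p q i j ∈ nSet p q := by
  refine ⟨nRoot_mem_soSet hi (by omega) (by omega) (by omega), ?_, ?_, ?_, ?_, ?_⟩ <;>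
    intros <;>
    simp (disch := omega) only [nRoot, ent_sub, ent_vecMulVec, Nat.sub_add_comm,
      vent_wVec_of_le, vent_vVec_of_le, vent_wVec_lower hpq, vent_vVec_lower hpq,
      vent_wVec_upper hpq, vent_vVec_upper hpq] <;>
    (try split_ifs) <;> first | omega | norm_num

lemma nRoot_mulVec_wVec (hpq : q ≤ p) {i j : ℕ} (hi : 1 ≤ i) (hij : i < j) (hjq : j ≤ q) :
    nRoot p q i j *ᵥ wVec p q j = (2 : ℝ) • wVec p q i := by
  rw [nRoot, sub_mulVec, vecMulVec_mulVec, vecMulVec_mulVec,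
    wVec_dotProduct_wVec hpq (by omega) hjq (by omega) hjq,
    vVec_dotProduct_wVec hpq hi (by omega) (by omega) hjq]
  simp only [op_smul_eq_smul, zero_smul, sub_zero, if_true]

lemma nRoot_mul_nRoot (hpq : q ≤ p) {i i' j : ℕ} (hi : 1 ≤ i) (hij : i < j) (hi' : 1 ≤ i')
    (hi'j : i' < j) (hjq : j ≤ q) : nRoot p q i j * nRoot p q i' j = 0 := by
  rw [nRoot, nRoot, sub_mul, mul_sub, mul_sub, vecMulVec_mul_vecMulVec, vecMulVec_mul_vecMulVec,
    vecMulVec_mul_vecMulVec, vecMulVec_mul_vecMulVec,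
    wVec_dotProduct_wVec hpq (by omega) hjq hi' (by omega),
    wVec_dotProduct_vVec hpq (by omega) hjq (by omega) hjq,
    vVec_dotProduct_wVec hpq hi (by omega) hi' (by omega),
    vVec_dotProduct_vVec hpq hi (by omega) (by omega) hjq, if_neg hi'j.ne', if_neg hij.ne]
  simp

lemma exists_mem_nSet_mulVec_wVec (hpq : q ≤ p) {j : ℕ} (hjq : j ≤ q) (s : ℕ → ℝ) :
    ∃ X ∈ nSet p q, X * X = 0 ∧
      X *ᵥ wVec p q j = ∑ i ∈ Finset.Icc 1 (j - 1), s i • wVec p q i := by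
  have hmem : ∀ i ∈ Finset.Icc 1 (j - 1), 1 ≤ i ∧ i < j := fun i hi => by
    rw [Finset.mem_Icc] at hi; omega
  refine ⟨∑ i ∈ Finset.Icc 1 (j - 1), (s i / 2) • nRoot p q i j, ?_, ?_, ?_⟩
  · exact (nSub p q).sum_mem fun i hi => (nSub p q).smul_mem _
      (nRoot_mem_nSet hpq (hmem i hi).1 (hmem i hi).2 hjq)
  · rw [Finset.sum_mul_sum]
    refine Finset.sum_eq_zero fun i hi => Finset.sum_eq_zero fun i' hi' => ?_
    rw [smul_mul_smul_comm, nRoot_mul_nRoot hpq (hmem i hi).1 (hmem i hi).2 (hmem i' hi').1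
      (hmem i' hi').2 hjq, smul_zero]
  · rw [sum_mulVec]
    refine Finset.sum_congr rfl fun i hi => ?_
    rw [smul_mulVec, nRoot_mulVec_wVec hpq (hmem i hi).1 (hmem i hi).2 hjq, smul_smul,
      div_mul_cancel₀ _ two_ne_zero]

end RootVectors

lemma val_mem_flagUnipotent_of_mem_Ngrp {p q : ℕ} (hpq : q ≤ p)
    {g : (Matrix (Fin (p + q)) (Fin (p + q)) ℝ)ˣ} (hg : g ∈ Ngrp p q) :
    (g : Matrix (Fin (p + q)) (Fin (p + q)) ℝ) ∈ flagUnipotent (wFlag p q) wFlag_mono q := by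
  induction hg using Subgroup.closure_induction'' with
  | mem _ hg =>
    obtain ⟨X, hX, rfl⟩ := hg
    exact exp_mem_flagUnipotent _ fun k hk v hv => mulVec_mem_wFlag_of_mem_nSet hpq hX hk hv
  | inv_mem _ hg =>
    obtain ⟨X, hX, rfl⟩ := hg
    -- `↑(expUnit X)⁻¹` is `exp (-X)`, and `-X ∈ 𝔫`
    exact exp_mem_flagUnipotent _ fun k hk v hv =>
      mulVec_mem_wFlag_of_mem_nSet hpq ((nSub p q).neg_mem hX) hk hv
  | one => exact one_mem _
  | mul _ _ _ _ hg hh => exact mul_mem hg hh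

theorem Ngrp_orbit_w_general (p q : ℕ) (hpq : q ≤ p)
    (j : ℕ) (hj1 : 1 ≤ j) (hj2 : j ≤ q) :
    orb (Ngrp p q) (wVec p q j)
      = {v | ∃ s : ℕ → ℝ,
          v = (∑ i ∈ Finset.Icc 1 (j - 1), s i • wVec p q i) + wVec p q j} := by
  ext v
  constructor
  · rintro ⟨g, hg, rfl⟩
    have hw : wVec p q j ∈ wFlag p q (j - 1 + 1) := wVec_mem_wFlag hj1 (by omega)
    obtain ⟨s, hs⟩ :=
      mem_wFlag_iff.1 (val_mem_flagUnipotent_of_mem_Ngrp hpq hg (j - 1) (by omega) _ hw)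
    exact ⟨s, by rw [hs, sub_add_cancel]⟩
  · rintro ⟨s, rfl⟩
    obtain ⟨X, hX, hXX, hXw⟩ := exists_mem_nSet_mulVec_wVec hpq hj2 s
    refine ⟨expUnit X, Subgroup.subset_closure ⟨X, hX, rfl⟩, ?_⟩
    show NormedSpace.exp X *ᵥ wVec p q j = _
    rw [exp_eq_one_add_of_mul_self_eq_zero hXX, add_mulVec, one_mulVec, hXw]
    exact add_comm _ _

/-- For every `1 ≤ j ≤ q`, the `N`-orbit of `w_j` is
`N(w_j) = {s_1 w_1 + ⋯ + s_{j-1} w_{j-1} + w_j : s_i ∈ ℝ}`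
(in particular `N(w_1) = {w_1}`). -/
theorem Ngrp_orbit_w (p q : ℕ) (hq : 1 ≤ q) (hpq : q ≤ p)
    (j : ℕ) (hj1 : 1 ≤ j) (hj2 : j ≤ q) :
    orb (Ngrp p q) (wVec p q j)
      = {v | ∃ s : ℕ → ℝ,
          v = (∑ i ∈ Finset.Icc 1 (j - 1), s i • wVec p q i) + wVec p q j} :=
  Ngrp_orbit_w_general p q hpq j hj1 hj2
end
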